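/- arXiv:2501.00976 — 4 statements merged into one kernel-verified Lean document; each statement's English description precedes it below -/
import Mathlib

section
/- In the reduced FA instance with m > 1, every optimal partition π* consists of exactly m coalitions, and for each coalition C ∈ π*: (a) there exists exactly one k ∈ [m] with K^k_X ⊆ C, and (b) for every h ∈ [3m], either K^h ⊆ C or K^h ∩ C = ∅. -/
open Finset

/-- FA utility of agent `i` with friend set `t` for a coalition `C` containing her:
`u_i(C) = |C ∩ F_i| − |C ∩ E_i| / n`, where `E_i = N \ (F_i ∪ {i})`. -/
def faUtil (n : ℕ) (t : Finset (Fin n)) (i : Fin n) (C : Finset (Fin n)) : ℚ :=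
  ((C ∩ t).card : ℚ) - ((C \ (t ∪ {i})).card : ℚ) / (n : ℚ)

/-- Social welfare of a partition of the agents (`SW(π) = Σ_i u_i(π(i))`). -/
def faSW (n : ℕ) (F : Fin n → Finset (Fin n))
    (π : Finpartition (univ : Finset (Fin n))) : ℚ :=
  ∑ C ∈ π.parts, ∑ i ∈ C, faUtil n (F i) i C

/-- The reduced FA instance built from a `3`-Partition instance `x : Fin (3m) → ℕ`:
the `n` agents are the disjoint union of element-cliques `elemClique h` of size `x h`
and set-cliques `setClique k` of size `X = 4m²T`; each clique is bidirectional, and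
between each element-clique and each set-clique there is a perfect matching of the
element-clique into the set-clique; no other friendship relations exist. -/
structure ReducedFA (m T n : ℕ) (x : Fin (3 * m) → ℕ) where
  F : Fin n → Finset (Fin n)
  elemClique : Fin (3 * m) → Finset (Fin n)
  setClique : Fin m → Finset (Fin n)
  irrefl : ∀ a, a ∉ F a
  symm : ∀ a b, a ∈ F b → b ∈ F a
  elem_card : ∀ h, (elemClique h).card = x h
  set_card : ∀ k, (setClique k).card = 4 * m ^ 2 * T
  elem_disj : ∀ h h', h ≠ h' → Disjoint (elemClique h) (elemClique h')
  set_disj : ∀ k k', k ≠ k' → Disjoint (setClique k) (setClique k')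
  elem_set_disj : ∀ h k, Disjoint (elemClique h) (setClique k)
  cover : (Finset.univ.biUnion elemClique) ∪ (Finset.univ.biUnion setClique)
    = (Finset.univ : Finset (Fin n))
  elem_clique : ∀ h, ∀ a ∈ elemClique h, ∀ b ∈ elemClique h, a ≠ b → b ∈ F a
  set_clique : ∀ k, ∀ a ∈ setClique k, ∀ b ∈ setClique k, a ≠ b → b ∈ F a
  matching : ∀ (h : Fin (3 * m)) (k : Fin m), ∀ a ∈ elemClique h,
    (setClique k ∩ F a).card = 1
  matching_inj : ∀ (h : Fin (3 * m)) (k : Fin m), ∀ b ∈ setClique k,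
    (elemClique h ∩ F b).card ≤ 1
  elem_elem : ∀ h h', h ≠ h' → ∀ a ∈ elemClique h, ∀ b ∈ elemClique h', b ∉ F a
  set_set : ∀ k k', k ≠ k' → ∀ a ∈ setClique k, ∀ b ∈ setClique k', b ∉ F a

/-!
`n` times the social welfare equals `n` plus the potential `∑_C ((n + 1) d(C) - |C|²)`, where
`d(C)` counts ordered pairs of friends inside `C`. An optimal partition therefore has potential
at least that of the baseline partition, which puts all element agents together with one set
clique and leaves every other set clique alone.

Splitting a set clique of size `X = 4m²T` loses at least `X` friend pairs, costing about
`nX ≈ 16m⁵T²`, while even keeping all `m²T` matching edges gains only about `8m⁵T²`; so each set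
clique lies inside one coalition. Then a coalition with `y` element agents and `q` set cliques
has value at most a linear expression in `y`, `q` and its element-clique friend pairs, minus a
nonnegative `excess (y, q)`; the baseline's total excess is `(mT)²`. A split element clique
costs more than `(mT)²`, and so does any coalition with no set clique or with two or more.
-/

open Function

section Welfare

variable {α : Type*} [DecidableEq α]

def friendPairs (F : α → Finset α) (C : Finset α) : ℕ := ∑ i ∈ C, #(C ∩ F i)

lemma sum_card_inter_comm {F : α → Finset α} (hF : ∀ a b, a ∈ F b → b ∈ F a)
    (A B : Finset α) : ∑ b ∈ B, #(A ∩ F b) = ∑ a ∈ A, #(B ∩ F a) := by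
  have h :=
    sum_card_bipartiteAbove_eq_sum_card_bipartiteBelow (fun b a => a ∈ F b) (s := B) (t := A)
  simp only [bipartiteAbove, bipartiteBelow, filter_mem_eq_inter] at h
  rw [h]
  refine sum_congr rfl fun a _ => ?_
  rw [← filter_mem_eq_inter]
  exact congrArg card (filter_congr fun b _ => ⟨hF a b, hF b a⟩)

variable {ι : Type*} [Fintype ι] {F : α → Finset α} {K : ι → Finset α}

lemma sum_card_inter_friends_add_one_of_cliques (hK : Pairwise (Disjoint on K))
    (hF : ∀ j, ∀ i ∈ K j, univ.biUnion K ∩ F i = (K j).erase i) (C : Finset α) :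
    ∑ i ∈ C ∩ univ.biUnion K, (#(C ∩ univ.biUnion K ∩ F i) + 1)
      = ∑ j, #(C ∩ K j) ^ 2 := by
  have hdisj : ((univ : Finset ι) : Set ι).PairwiseDisjoint fun j => C ∩ K j :=
    fun j _ j' _ hjj' => (hK hjj').mono inter_subset_right inter_subset_right
  rw [sum_congr (inter_biUnion _ _ _) fun _ _ => rfl, sum_biUnion hdisj]
  refine sum_congr rfl fun j _ => ?_
  have hi (i) (hi : i ∈ C ∩ K j) : #(C ∩ univ.biUnion K ∩ F i) + 1 = #(C ∩ K j) := by
    rw [inter_assoc, hF j i (mem_inter.1 hi).2, inter_erase, card_erase_add_one hi]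
  rw [sum_congr rfl hi, sum_const, smul_eq_mul, sq]

end Welfare

section Potential

variable {n : ℕ} (F : Fin n → Finset (Fin n))

def coalitionValue (C : Finset (Fin n)) : ℤ := (n + 1) * friendPairs F C - #C ^ 2

def potential (π : Finpartition (univ : Finset (Fin n))) : ℤ :=
  ∑ C ∈ π.parts, coalitionValue F C

variable {F} (hF : ∀ i, i ∉ F i)
include hF

lemma faUtil_eq {C : Finset (Fin n)} {i : Fin n} (hi : i ∈ C) :
    faUtil n (F i) i C = #(C ∩ F i) - (#C - #(C ∩ F i) - 1 : ℚ) / n := by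
  have hcard : #(C \ (F i ∪ {i})) + (#(C ∩ F i) + 1) = #C := by
    rw [← card_insert_of_notMem fun h => hF i (mem_inter.1 h).2, ← inter_insert_of_mem hi,
      ← union_singleton, add_comm, card_inter_add_card_sdiff]
  rw [faUtil, ← hcard]
  push_cast
  ring

lemma sum_faUtil (hn : 0 < n) (C : Finset (Fin n)) :
    ∑ i ∈ C, faUtil n (F i) i C = (coalitionValue F C + #C) / n := by
  have hn' : (n : ℚ) ≠ 0 := by positivity
  rw [sum_congr rfl fun i hi => faUtil_eq hF hi, coalitionValue, friendPairs, eq_div_iff hn']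
  simp only [sum_sub_distrib, ← sum_div, sum_const, nsmul_eq_mul]
  push_cast
  field_simp
  ring

lemma faSW_eq (hn : 0 < n) (π : Finpartition (univ : Finset (Fin n))) :
    faSW n F π = (potential F π + n) / n := by
  have hcard : ∑ C ∈ π.parts, (#C : ℚ) = n := by
    exact_mod_cast π.sum_card_parts.trans (card_fin n)
  simp only [faSW, sum_faUtil hF hn, ← sum_div, sum_add_distrib, hcard, potential]
  push_cast
  rfl

lemma faSW_le_faSW_iff (hn : 0 < n) (π σ : Finpartition (univ : Finset (Fin n))) :
    faSW n F σ ≤ faSW n F π ↔ potential F σ ≤ potential F π := by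
  rw [faSW_eq hF hn, faSW_eq hF hn, div_le_div_iff_of_pos_right (by exact_mod_cast hn)]
  exact_mod_cast add_le_add_iff_right _

end Potential

namespace Finpartition

variable {α : Type*} [DecidableEq α] {s t : Finset α} (π : Finpartition s)

lemma sum_card_inter (ht : t ⊆ s) : ∑ C ∈ π.parts, #(C ∩ t) = #t := by
  rw [← (π.restrict ht).sum_card_parts, π.sum_restrict ht card card_empty]
  rfl

lemma sum_sq_card_inter_le (ht : t ⊆ s) : ∑ C ∈ π.parts, #(C ∩ t) ^ 2 ≤ #t ^ 2 :=
  (sum_sq_le_sq_sum_of_nonneg fun _ _ => Nat.zero_le _).trans_eq (by rw [π.sum_card_inter ht])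

lemma sum_sq_card_inter_add_card_le (ht : t ⊆ s) (hsplit : ∀ C ∈ π.parts, ¬ t ⊆ C) :
    ∑ C ∈ π.parts, #(C ∩ t) ^ 2 + #t ≤ #t ^ 2 := by
  have hlt : ∀ C ∈ π.parts, #(C ∩ t) + 1 ≤ #t := fun C hC =>
    card_lt_card (ssubset_of_subset_of_ne inter_subset_right
      fun h => hsplit C hC (h ▸ inter_subset_left))
  calc ∑ C ∈ π.parts, #(C ∩ t) ^ 2 + #t
      = ∑ C ∈ π.parts, #(C ∩ t) * (#(C ∩ t) + 1) := by
        rw [← π.sum_card_inter ht, ← sum_add_distrib]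
        exact sum_congr rfl fun _ _ => by ring
    _ ≤ ∑ C ∈ π.parts, #(C ∩ t) * #t :=
        sum_le_sum fun C hC => Nat.mul_le_mul_left _ (hlt C hC)
    _ = #t ^ 2 := by rw [← sum_mul, π.sum_card_inter ht, sq]

lemma sum_sum_sq_card_inter_add_card_le {ι : Type*} [DecidableEq ι] {I : Finset ι}
    {K : ι → Finset α} (hK : ∀ j ∈ I, K j ⊆ s) {j₀ : ι} (hj₀ : j₀ ∈ I)
    (hsplit : ∀ C ∈ π.parts, ¬ K j₀ ⊆ C) :
    ∑ j ∈ I, ∑ C ∈ π.parts, #(C ∩ K j) ^ 2 + #(K j₀) ≤ ∑ j ∈ I, #(K j) ^ 2 := by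
  rw [← sum_erase_add _ _ hj₀, ← sum_erase_add _ _ hj₀, add_assoc]
  exact add_le_add (sum_le_sum fun j hj => π.sum_sq_card_inter_le (hK j (mem_of_mem_erase hj)))
    (π.sum_sq_card_inter_add_card_le (hK j₀ hj₀) hsplit)

lemma subset_or_disjoint {C D : Finset α} (hC : C ∈ π.parts) (hD : D ∈ π.parts)
    (htD : t ⊆ D) : t ⊆ C ∨ Disjoint t C := by
  by_cases h : C = D
  · exact .inl (h ▸ htD)
  · exact .inr ((π.disjoint hD hC (Ne.symm h)).mono_left htD)

lemma sum_card_filter_subset {ι : Type*} [Fintype ι] {K : ι → Finset α}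
    (hne : ∀ j, (K j).Nonempty) (hK : ∀ j, ∃ C ∈ π.parts, K j ⊆ C) :
    ∑ C ∈ π.parts, #{j | K j ⊆ C} = Fintype.card ι := by
  simp only [card_filter]
  rw [sum_comm, ← card_univ, card_eq_sum_ones]
  refine sum_congr rfl fun j _ => ?_
  obtain ⟨D, hD, hjD⟩ := hK j
  rw [← card_filter, card_eq_one]
  refine ⟨D, eq_singleton_iff_unique_mem.2 ⟨mem_filter.2 ⟨hD, hjD⟩, fun C hC => ?_⟩⟩
  obtain ⟨a, ha⟩ := hne j
  exact π.eq_of_mem_parts (mem_filter.1 hC).1 hD ((mem_filter.1 hC).2 ha) (hjD ha)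

end Finpartition

/-- The loss of a coalition with `y` element agents and `q` whole set cliques of size `X`,
among `N` agents, against a bound linear in `y` and `q`
(see `ReducedFA.coalitionValue_eq_of_respects`). -/
def excess (N X y q : ℤ) : ℤ := y ^ 2 + X ^ 2 * (q ^ 2 - q) - 2 * (N + 1 - X) * y * (q - 1)

section Excess

variable {N X S y q : ℤ}

lemma excess_eq_sq_add_mul (N X y q : ℤ) :
    excess N X y q = y ^ 2 + (q - 1) * (q * X ^ 2 - 2 * (N + 1 - X) * y) := by
  unfold excess; ring

lemma excess_nonneg (hG : 0 ≤ N + 1 - X) (hXS : 2 * (N + 1 - X) * S + 2 * S ^ 2 ≤ X ^ 2)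
    (hy : 0 ≤ y) (hyS : y ≤ S) (hq : 0 ≤ q) : 0 ≤ excess N X y q := by
  rw [excess_eq_sq_add_mul]
  rcases hq.eq_or_lt with rfl | hq
  · nlinarith
  · have hw : 2 * S ^ 2 ≤ q * X ^ 2 - 2 * (N + 1 - X) * y := by
      nlinarith [mul_le_mul_of_nonneg_left hyS hG, sq_nonneg X]
    nlinarith

lemma sq_lt_excess (hG : 0 ≤ N + 1 - X) (hXS : 2 * (N + 1 - X) * S + 2 * S ^ 2 ≤ X ^ 2)
    (hX : 0 < X) (hyS : y ≤ S) (hq : 2 ≤ q) : S ^ 2 < excess N X y q := by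
  have hw : 2 * S ^ 2 ≤ q * X ^ 2 - 2 * (N + 1 - X) * y := by
    nlinarith [mul_le_mul_of_nonneg_left hyS hG, sq_nonneg X]
  rw [excess_eq_sq_add_mul]
  nlinarith [sq_nonneg S, sq_nonneg y]

end Excess

/- Polynomial inequalities for `N = mT + 4m³T` agents, set cliques of size `X = 4m²T` and
`S = mT` element agents: after substituting `m = a + 2`, `T = b + 1` all coefficients are
positive. -/
section ReductionArithmetic

variable {m T : ℤ} (hm : 2 ≤ m) (hT : 1 ≤ T)
include hm hT

lemma reduction_gap_nonneg : 0 ≤ m * T + 4 * m ^ 3 * T + 1 - 4 * m ^ 2 * T := by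
  obtain ⟨a, rfl⟩ : ∃ a : ℕ, m = a + 2 := ⟨(m - 2).toNat, by omega⟩
  obtain ⟨b, rfl⟩ : ∃ b : ℕ, T = b + 1 := ⟨(T - 1).toNat, by omega⟩
  ring_nf
  positivity

lemma reduction_two_mul_gap_add_le :
    2 * (m * T + 4 * m ^ 3 * T + 1 - 4 * m ^ 2 * T) * (m * T) + 2 * (m * T) ^ 2
      ≤ (4 * m ^ 2 * T) ^ 2 := by
  obtain ⟨a, rfl⟩ : ∃ a : ℕ, m = a + 2 := ⟨(m - 2).toNat, by omega⟩
  obtain ⟨b, rfl⟩ : ∃ b : ℕ, T = b + 1 := ⟨(T - 1).toNat, by omega⟩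
  rw [← sub_nonneg]
  ring_nf
  positivity

lemma reduction_sq_lt_gap_mul :
    2 * (m * T) ^ 2 < (m * T + 4 * m ^ 3 * T + 1 - 4 * m ^ 2 * T) * (T + 1) := by
  obtain ⟨a, rfl⟩ : ∃ a : ℕ, m = a + 2 := ⟨(m - 2).toNat, by omega⟩
  obtain ⟨b, rfl⟩ : ∃ b : ℕ, T = b + 1 := ⟨(T - 1).toNat, by omega⟩
  rw [← sub_pos]
  ring_nf
  positivity

lemma reduction_sq_lt_succ_mul : 4 * (m * T) ^ 2 < (m * T + 4 * m ^ 3 * T + 1) * (T + 1) := by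
  obtain ⟨a, rfl⟩ : ∃ a : ℕ, m = a + 2 := ⟨(m - 2).toNat, by omega⟩
  obtain ⟨b, rfl⟩ : ∃ b : ℕ, T = b + 1 := ⟨(T - 1).toNat, by omega⟩
  rw [← sub_pos]
  ring_nf
  positivity

lemma reduction_split_lt :
    2 * (m * T + 4 * m ^ 3 * T + 1) * (m - 1) * (m * T) + 2 * (4 * m ^ 2 * T) * (m * T)
      + (m * T) ^ 2 < (m * T + 4 * m ^ 3 * T) * (4 * m ^ 2 * T) := by
  obtain ⟨a, rfl⟩ : ∃ a : ℕ, m = a + 2 := ⟨(m - 2).toNat, by omega⟩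
  obtain ⟨b, rfl⟩ : ∃ b : ℕ, T = b + 1 := ⟨(T - 1).toNat, by omega⟩
  rw [← sub_pos]
  ring_nf
  positivity

end ReductionArithmetic

namespace ReducedFA

variable {m T n : ℕ} {x : Fin (3 * m) → ℕ} (R : ReducedFA m T n x)

def elemAgents : Finset (Fin n) := univ.biUnion R.elemClique

def setAgents : Finset (Fin n) := univ.biUnion R.setClique

lemma disjoint_elemAgents_setAgents : Disjoint R.elemAgents R.setAgents := by
  rw [elemAgents, disjoint_biUnion_left]
  exact fun h _ => (disjoint_biUnion_right _ _ _).2 fun k _ => R.elem_set_disj h k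

lemma card_elemAgents : #R.elemAgents = ∑ h, x h := by
  rw [elemAgents, card_biUnion fun h _ h' _ => R.elem_disj h h']
  exact sum_congr rfl fun h _ => R.elem_card h

lemma setClique_subset_setAgents (k : Fin m) : R.setClique k ⊆ R.setAgents :=
  subset_biUnion_of_mem _ (mem_univ k)

lemma elemClique_subset_elemAgents (h : Fin (3 * m)) : R.elemClique h ⊆ R.elemAgents :=
  subset_biUnion_of_mem _ (mem_univ h)

lemma setClique_nonempty (hT : 0 < T) (k : Fin m) : (R.setClique k).Nonempty :=
  card_pos.1 (by rw [R.set_card]; have := k.pos; positivity)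

lemma sum_inter_elemAgents_add_sum_inter_setAgents {M : Type*} [AddCommMonoid M]
    (C : Finset (Fin n)) (f : Fin n → M) :
    ∑ i ∈ C ∩ R.elemAgents, f i + ∑ i ∈ C ∩ R.setAgents, f i = ∑ i ∈ C, f i := by
  rw [← sum_union (R.disjoint_elemAgents_setAgents.mono inter_subset_right inter_subset_right),
    ← inter_union_distrib_left, elemAgents, setAgents, R.cover, inter_univ]

lemma card_inter_elemAgents_add_card_inter_setAgents (C : Finset (Fin n)) :
    #(C ∩ R.elemAgents) + #(C ∩ R.setAgents) = #C := by
  simpa only [card_eq_sum_ones] using R.sum_inter_elemAgents_add_sum_inter_setAgents C fun _ => 1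

lemma setAgents_inter_F {k : Fin m} {b : Fin n} (hb : b ∈ R.setClique k) :
    R.setAgents ∩ R.F b = (R.setClique k).erase b := by
  ext t
  simp only [setAgents, mem_inter, mem_biUnion, mem_univ, true_and, mem_erase]
  constructor
  · rintro ⟨⟨k', hk'⟩, hbt⟩
    obtain rfl : k' = k := by_contra fun hne => R.set_set k k' (Ne.symm hne) b hb t hk' hbt
    exact ⟨fun h => R.irrefl b (h ▸ hbt), hk'⟩
  · rintro ⟨hne, ht⟩
    exact ⟨⟨k, ht⟩, R.set_clique k b hb t ht (Ne.symm hne)⟩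

lemma elemAgents_inter_F {h : Fin (3 * m)} {a : Fin n} (ha : a ∈ R.elemClique h) :
    R.elemAgents ∩ R.F a = (R.elemClique h).erase a := by
  ext t
  simp only [elemAgents, mem_inter, mem_biUnion, mem_univ, true_and, mem_erase]
  constructor
  · rintro ⟨⟨h', hh'⟩, hat⟩
    obtain rfl : h' = h := by_contra fun hne => R.elem_elem h h' (Ne.symm hne) a ha t hh' hat
    exact ⟨fun h => R.irrefl a (h ▸ hat), hh'⟩
  · rintro ⟨hne, ht⟩
    exact ⟨⟨h, ht⟩, R.elem_clique h a ha t ht (Ne.symm hne)⟩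

lemma card_setAgents_inter_F {a : Fin n} (ha : a ∈ R.elemAgents) :
    #(R.setAgents ∩ R.F a) = m := by
  obtain ⟨h, -, hah⟩ := mem_biUnion.1 ha
  rw [setAgents, biUnion_inter, card_biUnion fun k _ k' _ hkk' =>
    (R.set_disj k k' hkk').mono inter_subset_left inter_subset_left]
  simp [R.matching h _ a hah]

def crossPairs (C : Finset (Fin n)) : ℕ :=
  ∑ a ∈ C ∩ R.elemAgents, #(C ∩ R.setAgents ∩ R.F a)

lemma friendPairs_add_card (C : Finset (Fin n)) :
    friendPairs R.F C + #C = ∑ k, #(C ∩ R.setClique k) ^ 2 + ∑ h, #(C ∩ R.elemClique h) ^ 2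
      + 2 * R.crossPairs C := by
  have hsplit (i : Fin n) :
      #(C ∩ R.F i) = #(C ∩ R.elemAgents ∩ R.F i) + #(C ∩ R.setAgents ∩ R.F i) := by
    rw [← R.card_inter_elemAgents_add_card_inter_setAgents (C ∩ R.F i), inter_right_comm,
      inter_right_comm C (R.F i)]
  have hsets : ∑ i ∈ C ∩ R.setAgents, (#(C ∩ R.setAgents ∩ R.F i) + 1)
      = ∑ k, #(C ∩ R.setClique k) ^ 2 :=
    sum_card_inter_friends_add_one_of_cliques (fun k k' => R.set_disj k k')
      (fun k b hb => R.setAgents_inter_F hb) C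
  have helems : ∑ i ∈ C ∩ R.elemAgents, (#(C ∩ R.elemAgents ∩ R.F i) + 1)
      = ∑ h, #(C ∩ R.elemClique h) ^ 2 :=
    sum_card_inter_friends_add_one_of_cliques (fun h h' => R.elem_disj h h')
      (fun h a ha => R.elemAgents_inter_F ha) C
  have hcross := sum_card_inter_comm R.symm (C ∩ R.elemAgents) (C ∩ R.setAgents)
  rw [friendPairs, card_eq_sum_ones, ← sum_add_distrib,
    ← R.sum_inter_elemAgents_add_sum_inter_setAgents, crossPairs]
  simp only [hsplit, sum_add_distrib] at hsets helems ⊢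
  omega

def RespectsSetCliques (C : Finset (Fin n)) : Prop :=
  ∀ k, R.setClique k ⊆ C ∨ Disjoint (R.setClique k) C

def numSetCliques (C : Finset (Fin n)) : ℕ := #{k | R.setClique k ⊆ C}

variable {R} {C : Finset (Fin n)}

lemma card_inter_setClique (hC : R.RespectsSetCliques C) (k : Fin m) :
    #(C ∩ R.setClique k) = if R.setClique k ⊆ C then 4 * m ^ 2 * T else 0 := by
  split_ifs with hk
  · rw [inter_eq_right.2 hk, R.set_card]
  · rw [disjoint_iff_inter_eq_empty.1 ((hC k).resolve_left hk).symm, card_empty]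

lemma sum_sq_card_inter_setClique (hC : R.RespectsSetCliques C) :
    ∑ k, #(C ∩ R.setClique k) ^ 2 = R.numSetCliques C * (4 * m ^ 2 * T) ^ 2 := by
  simp [card_inter_setClique hC, apply_ite (· ^ 2), sum_ite, numSetCliques]

lemma card_inter_setAgents (hC : R.RespectsSetCliques C) :
    #(C ∩ R.setAgents) = R.numSetCliques C * (4 * m ^ 2 * T) := by
  rw [setAgents, inter_biUnion, card_biUnion fun k _ k' _ hkk' =>
    (R.set_disj k k' hkk').mono inter_subset_right inter_subset_right]
  simp [card_inter_setClique hC, sum_ite, numSetCliques]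

lemma crossPairs_le (hC : R.RespectsSetCliques C) :
    R.crossPairs C ≤ #(C ∩ R.elemAgents) * R.numSetCliques C := by
  refine (sum_le_sum fun a ha => ?_).trans_eq (sum_const_nat fun _ _ => rfl)
  obtain ⟨h, -, hah⟩ := mem_biUnion.1 (mem_inter.1 ha).2
  have hsub : C ∩ R.setAgents ∩ R.F a ⊆
      ({k | R.setClique k ⊆ C} : Finset (Fin m)).biUnion fun k => R.setClique k ∩ R.F a := by
    intro t ht
    obtain ⟨⟨htC, htS⟩, hta⟩ := mem_inter.1 ht |>.imp_left mem_inter.1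
    obtain ⟨k, -, htk⟩ := mem_biUnion.1 htS
    have hk : R.setClique k ⊆ C := (hC k).resolve_right fun hd => disjoint_left.1 hd htk htC
    exact mem_biUnion.2 ⟨k, mem_filter.2 ⟨mem_univ k, hk⟩, mem_inter.2 ⟨htk, hta⟩⟩
  refine (card_le_card hsub).trans (card_biUnion_le.trans_eq ?_)
  simp [R.matching h _ a hah, numSetCliques]

variable (R) in
lemma coalitionValue_eq (C : Finset (Fin n)) :
    coalitionValue R.F C = (n + 1) * (∑ k, #(C ∩ R.setClique k) ^ 2
      + ∑ h, #(C ∩ R.elemClique h) ^ 2 + 2 * R.crossPairs C - #C : ℤ) - #C ^ 2 := by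
  have h := congrArg (Nat.cast (R := ℤ)) (R.friendPairs_add_card C)
  push_cast at h ⊢
  rw [coalitionValue]
  linear_combination (n + 1 : ℤ) * h

lemma coalitionValue_eq_of_respects (hC : R.RespectsSetCliques C) :
    coalitionValue R.F C = R.numSetCliques C * ((n + 1) * ((4 * m ^ 2 * T) ^ 2 - 4 * m ^ 2 * T)
        - (4 * m ^ 2 * T) ^ 2 : ℤ)
      + (n + 1 - 2 * (4 * m ^ 2 * T)) * #(C ∩ R.elemAgents)
      + (n + 1) * ∑ h, #(C ∩ R.elemClique h) ^ 2
      - excess n (4 * m ^ 2 * T) #(C ∩ R.elemAgents) (R.numSetCliques C)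
      + 2 * (n + 1) * (R.crossPairs C - #(C ∩ R.elemAgents) * R.numSetCliques C : ℤ) := by
  have hcard := R.card_inter_elemAgents_add_card_inter_setAgents C
  rw [card_inter_setAgents hC] at hcard
  rw [coalitionValue_eq, sum_sq_card_inter_setClique hC, ← hcard, excess]
  push_cast
  ring

section Baseline

variable (R) (k₀ : Fin m)

def baselinePart (k : Fin m) : Finset (Fin n) :=
  if k = k₀ then R.elemAgents ∪ R.setClique k else R.setClique k

lemma mem_baselinePart {k : Fin m} {t : Fin n} :
    t ∈ R.baselinePart k₀ k ↔ t ∈ R.setClique k ∨ k = k₀ ∧ t ∈ R.elemAgents := by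
  unfold baselinePart
  split_ifs <;> simp [*, or_comm]

lemma disjoint_baselinePart {k k' : Fin m} (hkk' : k ≠ k') :
    Disjoint (R.baselinePart k₀ k) (R.baselinePart k₀ k') := by
  have hES := disjoint_left.1 R.disjoint_elemAgents_setAgents
  refine disjoint_left.2 fun t ht ht' => ?_
  rw [mem_baselinePart] at ht ht'
  rcases ht with ht | ⟨rfl, ht⟩ <;> rcases ht' with ht' | ⟨rfl, ht'⟩
  · exact disjoint_left.1 (R.set_disj k k' hkk') ht ht'
  · exact hES ht' (R.setClique_subset_setAgents k ht)
  · exact hES ht (R.setClique_subset_setAgents k' ht')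
  · exact hkk' rfl

lemma sup_image_baselinePart : (univ.image (R.baselinePart k₀)).sup id = univ := by
  refine eq_univ_of_forall fun t => mem_sup.2 ?_
  rcases mem_union.1 (R.cover ▸ mem_univ t) with ht | ht
  · exact ⟨_, mem_image_of_mem _ (mem_univ k₀),
      (R.mem_baselinePart k₀).2 (.inr ⟨rfl, ht⟩)⟩
  · obtain ⟨k, -, hk⟩ := mem_biUnion.1 ht
    exact ⟨_, mem_image_of_mem _ (mem_univ k), (R.mem_baselinePart k₀).2 (.inl hk)⟩

lemma pairwiseDisjoint_image_baselinePart :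
    (↑(univ.image (R.baselinePart k₀)) : Set (Finset (Fin n))).PairwiseDisjoint id := by
  intro _ hA _ hB hAB
  obtain ⟨k, -, rfl⟩ := mem_image.1 hA
  obtain ⟨k', -, rfl⟩ := mem_image.1 hB
  exact R.disjoint_baselinePart k₀ fun h => hAB (h ▸ rfl)

def baseline : Finpartition (univ : Finset (Fin n)) :=
  (Finpartition.ofPairwiseDisjoint _ (R.pairwiseDisjoint_image_baselinePart k₀)).copy
    (R.sup_image_baselinePart k₀)

lemma sum_baseline_parts {M : Type*} [AddCommMonoid M] (hT : 0 < T) (f : Finset (Fin n) → M)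
    (hf : f ∅ = 0) :
    ∑ C ∈ (R.baseline k₀).parts, f C = ∑ k, f (R.baselinePart k₀ k) := by
  refine (Finpartition.sum_ofPairwiseDisjoint_eq_sum (R.pairwiseDisjoint_image_baselinePart k₀)
    hf).trans (sum_image fun k _ k' _ h => ?_)
  by_contra hkk'
  have hd := R.disjoint_baselinePart k₀ hkk'
  rw [h, disjoint_self, bot_eq_empty] at hd
  obtain ⟨t, ht⟩ := R.setClique_nonempty hT k'
  exact notMem_empty t (hd ▸ (R.mem_baselinePart k₀).2 (.inl ht))

lemma baselinePart_inter_setAgents (k : Fin m) :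
    R.baselinePart k₀ k ∩ R.setAgents = R.setClique k := by
  ext t
  rw [mem_inter, mem_baselinePart]
  have := fun h : t ∈ R.elemAgents => disjoint_left.1 R.disjoint_elemAgents_setAgents h
  constructor
  · rintro ⟨ht | ⟨-, ht⟩, hS⟩
    exacts [ht, absurd hS (this ht)]
  · exact fun ht => ⟨.inl ht, R.setClique_subset_setAgents k ht⟩

lemma baselinePart_inter_elemAgents (k : Fin m) :
    R.baselinePart k₀ k ∩ R.elemAgents = if k = k₀ then R.elemAgents else ∅ := by
  unfold baselinePart
  split_ifs
  · rw [union_inter_cancel_left]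
  · exact disjoint_iff_inter_eq_empty.1
      (R.disjoint_elemAgents_setAgents.mono_right (R.setClique_subset_setAgents k)).symm

lemma setClique_subset_baselinePart (k : Fin m) : R.setClique k ⊆ R.baselinePart k₀ k :=
  fun _ ht => (R.mem_baselinePart k₀).2 (.inl ht)

lemma disjoint_setClique_baselinePart {k k' : Fin m} (hkk' : k' ≠ k) :
    Disjoint (R.setClique k') (R.baselinePart k₀ k) := by
  refine disjoint_left.2 fun t ht ht' => disjoint_left.1 (R.set_disj k' k hkk') ht ?_
  rw [← R.baselinePart_inter_setAgents k₀ k]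
  exact mem_inter.2 ⟨ht', R.setClique_subset_setAgents k' ht⟩

lemma respectsSetCliques_baselinePart (k : Fin m) :
    R.RespectsSetCliques (R.baselinePart k₀ k) :=
  fun k' => if h : k' = k then .inl (h ▸ R.setClique_subset_baselinePart k₀ k)
    else .inr (R.disjoint_setClique_baselinePart k₀ h)

lemma numSetCliques_baselinePart (hT : 0 < T) (k : Fin m) :
    R.numSetCliques (R.baselinePart k₀ k) = 1 := by
  refine card_eq_one.2 ⟨k, eq_singleton_iff_unique_mem.2 ⟨?_, fun k' hk' => ?_⟩⟩
  · exact mem_filter.2 ⟨mem_univ k, R.setClique_subset_baselinePart k₀ k⟩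
  · by_contra hkk'
    obtain ⟨t, ht⟩ := R.setClique_nonempty hT k'
    exact disjoint_left.1 (R.disjoint_setClique_baselinePart k₀ hkk') ht
      ((mem_filter.1 hk').2 ht)

lemma crossPairs_baselinePart (k : Fin m) :
    R.crossPairs (R.baselinePart k₀ k) = #(R.baselinePart k₀ k ∩ R.elemAgents) := by
  rw [crossPairs, card_eq_sum_ones]
  refine sum_congr rfl fun a ha => ?_
  obtain ⟨h, -, hah⟩ := mem_biUnion.1 (mem_inter.1 ha).2
  rw [baselinePart_inter_setAgents, R.matching h k a hah]

lemma coalitionValue_baselinePart (hT : 0 < T) (k : Fin m) :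
    coalitionValue R.F (R.baselinePart k₀ k) =
      ((n + 1) * ((4 * m ^ 2 * T) ^ 2 - 4 * m ^ 2 * T) - (4 * m ^ 2 * T) ^ 2 : ℤ)
      + if k = k₀ then (n + 1 - 2 * (4 * m ^ 2 * T)) * ∑ h, (x h : ℤ)
          + (n + 1) * ∑ h, (x h : ℤ) ^ 2 - (∑ h, (x h : ℤ)) ^ 2 else 0 := by
  have hB (h : Fin (3 * m)) : R.baselinePart k₀ k ∩ R.elemClique h
      = R.baselinePart k₀ k ∩ R.elemAgents ∩ R.elemClique h := by
    rw [inter_assoc, inter_eq_right.2 (R.elemClique_subset_elemAgents h)]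
  rw [coalitionValue_eq_of_respects (R.respectsSetCliques_baselinePart k₀ k),
    numSetCliques_baselinePart R k₀ hT, crossPairs_baselinePart]
  simp only [hB, baselinePart_inter_elemAgents]
  split_ifs
  · simp [inter_eq_right.2 (R.elemClique_subset_elemAgents _), R.elem_card, card_elemAgents,
      excess]
    ring
  · simp [excess]

lemma potential_baseline (hT : 0 < T) :
    potential R.F (R.baseline k₀) =
      m * ((n + 1) * ((4 * m ^ 2 * T) ^ 2 - 4 * m ^ 2 * T) - (4 * m ^ 2 * T) ^ 2 : ℤ)
      + (n + 1 - 2 * (4 * m ^ 2 * T)) * ∑ h, (x h : ℤ)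
      + (n + 1) * ∑ h, (x h : ℤ) ^ 2 - (∑ h, (x h : ℤ)) ^ 2 := by
  rw [potential, R.sum_baseline_parts k₀ hT _ (by simp [coalitionValue, friendPairs])]
  simp only [R.coalitionValue_baselinePart k₀ hT, sum_add_distrib, sum_const, card_univ,
    Fintype.card_fin, sum_ite_eq', mem_univ, if_true, nsmul_eq_mul]
  ring

end Baseline

lemma card_inter_elemAgents_le (hsum : ∑ h, x h = m * T) (C : Finset (Fin n)) :
    #(C ∩ R.elemAgents) ≤ m * T :=
  (card_le_card inter_subset_right).trans (R.card_elemAgents.trans hsum).le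

variable (R) in
lemma sum_sum_sq_card_inter_elemClique_le (π : Finpartition (univ : Finset (Fin n))) :
    ∑ h, ∑ C ∈ π.parts, (#(C ∩ R.elemClique h) : ℤ) ^ 2 ≤ ∑ h, (x h : ℤ) ^ 2 :=
  mod_cast sum_le_sum fun h _ => R.elem_card h ▸ π.sum_sq_card_inter_le (subset_univ _)

variable (R) in
lemma coalitionValue_le (C : Finset (Fin n)) :
    coalitionValue R.F C ≤ n * ∑ k, #(C ∩ R.setClique k) ^ 2
      + (n + 1) * (∑ h, #(C ∩ R.elemClique h) ^ 2 + 2 * m * #(C ∩ R.elemAgents)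
        - #C : ℤ) := by
  have hA : ∑ k, #(C ∩ R.setClique k) ^ 2 ≤ #C ^ 2 := by
    refine (sum_sq_le_sq_sum_of_nonneg fun _ _ => Nat.zero_le _).trans
      (Nat.pow_le_pow_left ?_ 2)
    rw [← card_biUnion fun k _ k' _ hkk' =>
      (R.set_disj k k' hkk').mono inter_subset_right inter_subset_right, ← inter_biUnion]
    exact card_le_card inter_subset_left
  have hcross : R.crossPairs C ≤ #(C ∩ R.elemAgents) * m := by
    refine (sum_le_sum fun a ha => ?_).trans_eq (sum_const_nat fun _ _ => rfl)
    exact (card_le_card (inter_subset_inter_right inter_subset_right)).trans_eq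
      (R.card_setAgents_inter_F (mem_inter.1 ha).2)
  rw [coalitionValue_eq]
  have hA' : (∑ k, #(C ∩ R.setClique k) ^ 2 : ℤ) ≤ #C ^ 2 := by exact_mod_cast hA
  have hcross' : (R.crossPairs C : ℤ) ≤ #(C ∩ R.elemAgents) * m := by exact_mod_cast hcross
  push_cast at hA' ⊢
  nlinarith

variable (R) in
lemma potential_le (π : Finpartition (univ : Finset (Fin n))) :
    potential R.F π ≤ n * ∑ k, ∑ C ∈ π.parts, #(C ∩ R.setClique k) ^ 2
      + (n + 1) * (∑ h, (x h : ℤ) ^ 2 + 2 * m * ∑ h, (x h : ℤ) - n) := by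
  have hcard : ∑ C ∈ π.parts, (#C : ℤ) = n := by
    exact_mod_cast π.sum_card_parts.trans (card_fin n)
  have helem : ∑ C ∈ π.parts, (#(C ∩ R.elemAgents) : ℤ) = ∑ h, (x h : ℤ) := by
    exact_mod_cast (π.sum_card_inter (subset_univ _)).trans R.card_elemAgents
  have hsq := R.sum_sum_sq_card_inter_elemClique_le π
  calc potential R.F π
      ≤ ∑ C ∈ π.parts, (n * ∑ k, #(C ∩ R.setClique k) ^ 2
        + (n + 1) * (∑ h, #(C ∩ R.elemClique h) ^ 2 + 2 * m * #(C ∩ R.elemAgents)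
          - #C : ℤ)) :=
        sum_le_sum fun C _ => R.coalitionValue_le C
    _ = n * ∑ k, ∑ C ∈ π.parts, #(C ∩ R.setClique k) ^ 2
        + (n + 1) * (∑ h, ∑ C ∈ π.parts, (#(C ∩ R.elemClique h) : ℤ) ^ 2
          + 2 * m * ∑ C ∈ π.parts, (#(C ∩ R.elemAgents) : ℤ)
          - ∑ C ∈ π.parts, (#C : ℤ)) := by
        push_cast
        simp only [sum_add_distrib, sum_sub_distrib, ← mul_sum]
        rw [sum_comm (s := π.parts), sum_comm (s := π.parts)]
    _ ≤ _ := by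
        rw [hcard, helem]
        nlinarith

lemma exists_part_superset_setClique (hm : 1 < m) (hT : 0 < T) (hsum : ∑ h, x h = m * T)
    (hn : n = m * T + 4 * m ^ 3 * T) {π : Finpartition (univ : Finset (Fin n))}
    (hopt : ∀ σ, potential R.F σ ≤ potential R.F π) (k : Fin m) :
    ∃ C ∈ π.parts, R.setClique k ⊆ C := by
  by_contra! hsplit
  have hA := π.sum_sum_sq_card_inter_add_card_le (fun k' _ => subset_univ (R.setClique k'))
    (mem_univ k) hsplit
  simp only [R.set_card, sum_const, card_univ, Fintype.card_fin, smul_eq_mul] at hA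
  have hA' : (∑ k', ∑ C ∈ π.parts, #(C ∩ R.setClique k') ^ 2 : ℤ)
      ≤ m * (4 * m ^ 2 * T) ^ 2 - 4 * m ^ 2 * T := by
    have := (Nat.cast_le (α := ℤ)).2 hA
    push_cast at this ⊢
    linarith
  have hnA := mul_le_mul_of_nonneg_left hA' (Nat.cast_nonneg (α := ℤ) n)
  have hbase := (R.potential_baseline k hT).symm.trans_le ((hopt _).trans (R.potential_le π))
  have key := reduction_split_lt (m := m) (T := T) (by exact_mod_cast hm) (by exact_mod_cast hT)
  have hS : ∑ h, (x h : ℤ) = m * T := by exact_mod_cast hsum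
  have hn' : (n : ℤ) = m * T + 4 * m ^ 3 * T := by exact_mod_cast hn
  push_cast at hbase
  rw [hS] at hbase
  rw [hn'] at hbase hnA
  linarith

lemma excess_nonneg_coalition (hm : 1 < m) (hT : 0 < T) (hsum : ∑ h, x h = m * T)
    (hn : n = m * T + 4 * m ^ 3 * T) (C : Finset (Fin n)) :
    0 ≤ excess n (4 * m ^ 2 * T) #(C ∩ R.elemAgents) (R.numSetCliques C) := by
  have hm' : (2 : ℤ) ≤ m := by exact_mod_cast hm
  have hT' : (1 : ℤ) ≤ T := by exact_mod_cast hT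
  rw [show (n : ℤ) = m * T + 4 * m ^ 3 * T by exact_mod_cast hn]
  exact excess_nonneg (reduction_gap_nonneg hm' hT') (reduction_two_mul_gap_add_le hm' hT')
    (Nat.cast_nonneg _) (by exact_mod_cast R.card_inter_elemAgents_le hsum C) (Nat.cast_nonneg _)

section WholeSetCliques

variable {π : Finpartition (univ : Finset (Fin n))}
  (hwhole : ∀ k, ∃ C ∈ π.parts, R.setClique k ⊆ C)
include hwhole

lemma respectsSetCliques_of_mem_parts {C : Finset (Fin n)} (hC : C ∈ π.parts) :
    R.RespectsSetCliques C := fun k =>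
  let ⟨_, hD, hkD⟩ := hwhole k
  π.subset_or_disjoint hC hD hkD

lemma sum_numSetCliques (hT : 0 < T) : ∑ C ∈ π.parts, R.numSetCliques C = m := by
  simpa [numSetCliques] using π.sum_card_filter_subset (R.setClique_nonempty hT) hwhole

lemma excess_le_of_optimal (hm : 0 < m) (hT : 0 < T)
    (hopt : ∀ σ, potential R.F σ ≤ potential R.F π) :
    (n + 1) * (∑ h, (x h : ℤ) ^ 2
        - ∑ h, ∑ C ∈ π.parts, (#(C ∩ R.elemClique h) : ℤ) ^ 2)
      + ∑ C ∈ π.parts, excess n (4 * m ^ 2 * T) #(C ∩ R.elemAgents) (R.numSetCliques C)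
      ≤ (∑ h, (x h : ℤ)) ^ 2 := by
  have hpart : ∀ C ∈ π.parts, coalitionValue R.F C
      + excess n (4 * m ^ 2 * T) #(C ∩ R.elemAgents) (R.numSetCliques C)
      ≤ R.numSetCliques C
          * ((n + 1) * ((4 * m ^ 2 * T) ^ 2 - 4 * m ^ 2 * T) - (4 * m ^ 2 * T) ^ 2 : ℤ)
        + (n + 1 - 2 * (4 * m ^ 2 * T)) * #(C ∩ R.elemAgents)
        + (n + 1) * ∑ h, (#(C ∩ R.elemClique h) : ℤ) ^ 2 := fun C hC => by
    have hC' := R.respectsSetCliques_of_mem_parts hwhole hC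
    have hcross : (R.crossPairs C : ℤ) ≤ #(C ∩ R.elemAgents) * R.numSetCliques C := by
      exact_mod_cast crossPairs_le hC'
    rw [coalitionValue_eq_of_respects hC']
    push_cast
    nlinarith
  have hq : ∑ C ∈ π.parts, (R.numSetCliques C : ℤ) = m := by
    exact_mod_cast R.sum_numSetCliques hwhole hT
  have hy : ∑ C ∈ π.parts, (#(C ∩ R.elemAgents) : ℤ) = ∑ h, (x h : ℤ) := by
    exact_mod_cast (π.sum_card_inter (subset_univ _)).trans R.card_elemAgents
  have hsum := sum_le_sum hpart
  simp only [sum_add_distrib, ← sum_mul, ← mul_sum, hq, hy] at hsum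
  rw [sum_comm (s := univ)]
  have hbase := R.potential_baseline ⟨0, hm⟩ hT ▸ hopt (R.baseline ⟨0, hm⟩)
  rw [potential] at hbase
  linarith

variable (hm : 1 < m) (hT : 0 < T) (hsum : ∑ h, x h = m * T)
  (hn : n = m * T + 4 * m ^ 3 * T) (hopt : ∀ σ, potential R.F σ ≤ potential R.F π)
include hm hT hsum hn hopt

lemma excess_le_sq {C : Finset (Fin n)} (hC : C ∈ π.parts) :
    excess n (4 * m ^ 2 * T) #(C ∩ R.elemAgents) (R.numSetCliques C) ≤ (m * T) ^ 2 := by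
  have key := R.excess_le_of_optimal hwhole (by omega) hT hopt
  have hB := R.sum_sum_sq_card_inter_elemClique_le π
  have hexc := single_le_sum (fun C _ => R.excess_nonneg_coalition hm hT hsum hn C) hC
  rw [show ∑ h, (x h : ℤ) = m * T by exact_mod_cast hsum] at key
  nlinarith [mul_nonneg (by positivity : (0 : ℤ) ≤ n + 1) (sub_nonneg.2 hB)]

lemma numSetCliques_lt_two {C : Finset (Fin n)} (hC : C ∈ π.parts) : R.numSetCliques C < 2 := by
  by_contra! hq
  have hm' : (2 : ℤ) ≤ m := by exact_mod_cast hm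
  have hT' : (1 : ℤ) ≤ T := by exact_mod_cast hT
  have hle := R.excess_le_sq hwhole hm hT hsum hn hopt hC
  rw [show (n : ℤ) = m * T + 4 * m ^ 3 * T by exact_mod_cast hn] at hle
  exact (sq_lt_excess (reduction_gap_nonneg hm' hT') (reduction_two_mul_gap_add_le hm' hT')
    (by positivity) (by exact_mod_cast R.card_inter_elemAgents_le hsum C)
    (by exact_mod_cast hq)).not_ge hle

variable (hx : ∀ h, T < 4 * x h)
include hx

lemma exists_part_superset_elemClique (h₀ : Fin (3 * m)) :
    ∃ C ∈ π.parts, R.elemClique h₀ ⊆ C := by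
  by_contra! hsplit
  have hB := π.sum_sum_sq_card_inter_add_card_le (fun h _ => subset_univ (R.elemClique h))
    (mem_univ h₀) hsplit
  simp only [R.elem_card] at hB
  have hB' : ∑ h, ∑ C ∈ π.parts, (#(C ∩ R.elemClique h) : ℤ) ^ 2 + x h₀
      ≤ ∑ h, (x h : ℤ) ^ 2 := mod_cast hB
  have key := R.excess_le_of_optimal hwhole (by omega) hT hopt
  have hexc := sum_nonneg (s := π.parts) fun C _ => R.excess_nonneg_coalition hm hT hsum hn C
  have hx₀ : (T : ℤ) + 1 ≤ 4 * x h₀ := by exact_mod_cast hx h₀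
  have hgap := reduction_sq_lt_succ_mul (m := m) (T := T) (by exact_mod_cast hm)
    (by exact_mod_cast hT)
  rw [show ∑ h, (x h : ℤ) = m * T by exact_mod_cast hsum] at key
  rw [← show (n : ℤ) = m * T + 4 * m ^ 3 * T by exact_mod_cast hn] at hgap
  have hn1 : (0 : ℤ) ≤ n + 1 := by positivity
  nlinarith [mul_le_mul_of_nonneg_left hx₀ hn1,
    mul_le_mul_of_nonneg_left (le_sub_iff_add_le'.2 hB') hn1]

lemma numSetCliques_ne_zero {C : Finset (Fin n)} (hC : C ∈ π.parts) :
    R.numSetCliques C ≠ 0 := by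
  intro hq
  obtain ⟨t, htC⟩ := π.nonempty_of_mem_parts hC
  have htE : t ∈ R.elemAgents := by
    refine (mem_union.1 (R.cover ▸ mem_univ t)).resolve_right fun ht => ?_
    obtain ⟨k, -, htk⟩ := mem_biUnion.1 ht
    have hk := (R.respectsSetCliques_of_mem_parts hwhole hC k).resolve_right
      fun hd => disjoint_left.1 hd htk htC
    exact (card_pos.2 ⟨k, mem_filter.2 ⟨mem_univ k, hk⟩⟩).ne' hq
  obtain ⟨h, -, hth⟩ := mem_biUnion.1 htE
  obtain ⟨D, hD, hhD⟩ := R.exists_part_superset_elemClique hwhole hm hT hsum hn hopt hx h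
  obtain rfl : D = C := π.eq_of_mem_parts hD hC (hhD hth) htC
  have hy : (T : ℤ) + 1 ≤ 4 * #(D ∩ R.elemAgents) := by
    have hxy := card_le_card (subset_inter hhD (R.elemClique_subset_elemAgents h))
    have := hx h
    rw [R.elem_card] at hxy
    exact_mod_cast (by omega : T + 1 ≤ 4 * #(D ∩ R.elemAgents))
  have hm' : (2 : ℤ) ≤ m := by exact_mod_cast hm
  have hT' : (1 : ℤ) ≤ T := by exact_mod_cast hT
  have hgap := reduction_sq_lt_gap_mul hm' hT'
  have hle := R.excess_le_sq hwhole hm hT hsum hn hopt hC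
  rw [hq, excess, show (n : ℤ) = m * T + 4 * m ^ 3 * T by exact_mod_cast hn] at hle
  push_cast at hle
  nlinarith [mul_le_mul_of_nonneg_left hy (reduction_gap_nonneg hm' hT')]

end WholeSetCliques

end ReducedFA

/-- In the reduced FA instance with `m > 1`, every optimal partition has exactly `m`
coalitions, each containing exactly one set-clique, and each element-clique is either
contained in or disjoint from every coalition. -/
theorem stmt11 (m T n : ℕ) (hm : 1 < m) (hT : 0 < T)
    (x : Fin (3 * m) → ℕ)
    (hsum : ∑ h, x h = m * T)
    (hx : ∀ h, T < 4 * x h ∧ 2 * x h < T)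
    (hn : n = m * T + 4 * m ^ 3 * T)
    (R : ReducedFA m T n x)
    (π : Finpartition (univ : Finset (Fin n)))
    (hopt : ∀ σ : Finpartition (univ : Finset (Fin n)), faSW n R.F σ ≤ faSW n R.F π) :
    π.parts.card = m ∧
      ∀ C ∈ π.parts,
        (∃! k : Fin m, R.setClique k ⊆ C) ∧
        ∀ h : Fin (3 * m), R.elemClique h ⊆ C ∨ Disjoint (R.elemClique h) C := by
  have hopt' (σ) : potential R.F σ ≤ potential R.F π :=
    (faSW_le_faSW_iff R.irrefl (by rw [hn]; positivity) π σ).1 (hopt σ)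
  have hx' (h) : T < 4 * x h := (hx h).1
  have hwhole := R.exists_part_superset_setClique hm hT hsum hn hopt'
  have hone (C) (hC : C ∈ π.parts) : R.numSetCliques C = 1 := by
    have := R.numSetCliques_lt_two hwhole hm hT hsum hn hopt' hC
    have := R.numSetCliques_ne_zero hwhole hm hT hsum hn hopt' hx' hC
    omega
  refine ⟨?_, fun C hC =>
    ⟨(Fintype.existsUnique_iff_card_one _).2 (hone C hC), fun h => ?_⟩⟩
  · rw [card_eq_sum_ones, sum_congr rfl fun C hC => (hone C hC).symm]
    exact R.sum_numSetCliques hwhole hT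
  · obtain ⟨D, hD, hhD⟩ := R.exists_part_superset_elemClique hwhole hm hT hsum hn hopt' hx' h
    exact π.subset_or_disjoint hC hD hhD
end

section
/- Let π = {P_1, P_2} and π' = {P'_1, P'_2} be partitions of N into two coalitions with |P'_1| = |P_1| and |P'_2| = |P_2|. Let f_π (resp. f_{π'}) denote the number of friendship relations (ordered pairs (i,j) with j ∈ F_i) whose both endpoints lie in the same coalition of π (resp. π'). Then SW(π') − SW(π) = (f_{π'} − f_π)·(1 + 1/n). -/
open Finset

/-- Social welfare of the two-coalition partition `{A, B}` of the agents. -/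
def faSW2 (n : ℕ) (F : Fin n → Finset (Fin n)) (A B : Finset (Fin n)) : ℚ :=
  (∑ i ∈ A, faUtil n (F i) i A) + ∑ i ∈ B, faUtil n (F i) i B

/-- Number of friendship relations (ordered pairs) within the coalitions of `{A, B}`. -/
def faInner (n : ℕ) (F : Fin n → Finset (Fin n)) (A B : Finset (Fin n)) : ℕ :=
  (∑ i ∈ A, (A ∩ F i).card) + ∑ i ∈ B, (B ∩ F i).card


lemma util_eq (n : ℕ) (hn : 0 < n) (t : Finset (Fin n)) (i : Fin n) (ht : i ∉ t)
    (A : Finset (Fin n)) (hi : i ∈ A) :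
    faUtil n t i A = (1 + 1/(n:ℚ)) * ((A ∩ t).card : ℚ) - ((A.card : ℚ) - 1)/n := by
  have h1 : A \ (t ∪ {i}) = (A \ {i}) \ t := by
    ext x; simp only [mem_sdiff, mem_union, mem_singleton]; tauto
  have h2 : (A \ {i}) ∩ t = A ∩ t := by
    ext x
    simp only [mem_inter, mem_sdiff, mem_singleton]
    constructor
    · tauto
    · rintro ⟨hA, hT⟩; exact ⟨⟨hA, fun h => ht (h ▸ hT)⟩, hT⟩
  have h3 : ((A \ {i}) \ t).card + ((A \ {i}) ∩ t).card = (A \ {i}).card :=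
    card_sdiff_add_card_inter _ _
  have h4 : (A \ {i}).card = A.card - 1 := by
    rw [card_sdiff_of_subset (by simpa using hi), card_singleton]
  have hA1 : 1 ≤ A.card := card_pos.mpr ⟨i, hi⟩
  have h5 : ((A \ (t ∪ {i})).card : ℚ) = (A.card : ℚ) - 1 - ((A ∩ t).card : ℚ) := by
    rw [h1]
    have := h3
    rw [h2, h4] at this
    have : (((A \ {i}) \ t).card : ℚ) + ((A ∩ t).card : ℚ) = (A.card : ℚ) - 1 := by
      exact_mod_cast by exact_mod_cast this
    linarith
  have hn' : (n : ℚ) ≠ 0 := Nat.cast_ne_zero.mpr hn.ne'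
  rw [faUtil, h5]
  field_simp
  ring

lemma sw_eq (n : ℕ) (hn : 0 < n) (F : Fin n → Finset (Fin n)) (hF : ∀ j, j ∉ F j)
    (A B : Finset (Fin n)) :
    faSW2 n F A B = (1 + 1/(n:ℚ)) * (faInner n F A B : ℚ)
      - ((A.card : ℚ) * ((A.card : ℚ) - 1) + (B.card : ℚ) * ((B.card : ℚ) - 1)) / n := by
  have hA : ∑ i ∈ A, faUtil n (F i) i A
      = (1 + 1/(n:ℚ)) * (∑ i ∈ A, ((A ∩ F i).card : ℚ)) - (A.card : ℚ) * ((A.card : ℚ) - 1)/n := by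
    rw [Finset.mul_sum]
    rw [show (A.card : ℚ) * ((A.card : ℚ) - 1)/n = ∑ _i ∈ A, ((A.card : ℚ) - 1)/n by
      rw [Finset.sum_const, nsmul_eq_mul]; ring]
    rw [← Finset.sum_sub_distrib]
    exact Finset.sum_congr rfl fun i hi => util_eq n hn (F i) i (hF i) A hi
  have hB : ∑ i ∈ B, faUtil n (F i) i B
      = (1 + 1/(n:ℚ)) * (∑ i ∈ B, ((B ∩ F i).card : ℚ)) - (B.card : ℚ) * ((B.card : ℚ) - 1)/n := by
    rw [Finset.mul_sum]
    rw [show (B.card : ℚ) * ((B.card : ℚ) - 1)/n = ∑ _i ∈ B, ((B.card : ℚ) - 1)/n by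
      rw [Finset.sum_const, nsmul_eq_mul]; ring]
    rw [← Finset.sum_sub_distrib]
    exact Finset.sum_congr rfl fun i hi => util_eq n hn (F i) i (hF i) B hi
  rw [faSW2, hA, hB, faInner]
  push_cast
  ring
/-- For two partitions `{P₁, P₂}` and `{P₁', P₂'}` of `N` into two coalitions with
`|P₁'| = |P₁|` and `|P₂'| = |P₂|`, the social welfare difference is
`(f_{π'} − f_π)·(1 + 1/n)`, where `f` counts friendship relations within coalitions. -/
theorem stmt13 (n : ℕ) (hn : 0 < n) (F : Fin n → Finset (Fin n)) (hF : ∀ j, j ∉ F j)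
    (P₁ P₂ P₁' P₂' : Finset (Fin n))
    (hd : Disjoint P₁ P₂) (hu : P₁ ∪ P₂ = univ)
    (hd' : Disjoint P₁' P₂') (hu' : P₁' ∪ P₂' = univ)
    (hc1 : P₁'.card = P₁.card) (hc2 : P₂'.card = P₂.card) :
    faSW2 n F P₁' P₂' - faSW2 n F P₁ P₂ =
      ((faInner n F P₁' P₂' : ℚ) - (faInner n F P₁ P₂ : ℚ)) * (1 + 1 / (n : ℚ)) := by
  rw [sw_eq n hn F hF, sw_eq n hn F hF, hc1, hc2]
  ring
end

section
/- For every ε > 0 there exists N₀ such that the following holds for every FA game with n ≥ N₀ agents. Let {P_1, P_2} be a partition of N with |P_1| = ⌈n/2⌉ and |P_2| = ⌊n/2⌋ that is swap-stable, i.e., for every i ∈ P_1 and j ∈ P_2, SW({P_1 \ {i} ∪ {j}, P_2 \ {j} ∪ {i}}) ≤ SW({P_1, P_2}). Let π be the partition of N whose coalitions are the weakly connected components of the friendship graph restricted to P_1 together with the weakly connected components of the friendship graph restricted to P_2. Then for every partition σ of N, SW(σ) ≤ (4 + ε)·SW(π). -/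
/-!
Let `m` be the number of friendship arcs, `e(C)` the number of arcs inside `C`, and `X` the
number of arcs crossing the cut `{P₁, P₂}`. No partition has welfare above `m`. Summing the
swap-stability inequalities over all pairs `(i, j) ∈ P₁ × P₂` gives
`n·X ≤ (n + 1)(e(P₁) + e(P₂)) + 2X`, hence `(n - 2)·m ≤ (2n - 1)(e(P₁) + e(P₂))`.
A component `C` of `π` has `|C| ≤ ⌈n/2⌉` and, being connected, at least `|C| - 1` inner arcs,
so its welfare is at least `(n + 1)/(2n)·e(C)`; and the components carry every arc inside
`P₁` or `P₂`. Altogether `SW(σ) ≤ 2n(2n - 1)/((n + 1)(n - 2))·SW(π)`, a ratio tending to `4`.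
-/

open Finset

/-- Adjacency in the undirected graph underlying the friendship graph. -/
def faAdj (n : ℕ) (F : Fin n → Finset (Fin n)) (a b : Fin n) : Prop :=
  a ≠ b ∧ (b ∈ F a ∨ a ∈ F b)

/-- `C` is a weakly connected component of the friendship graph restricted to `P`. -/
def IsComponent (n : ℕ) (F : Fin n → Finset (Fin n)) (P C : Finset (Fin n)) : Prop :=
  C ⊆ P ∧ C.Nonempty ∧
  (∀ a ∈ C, ∀ b ∈ P, faAdj n F a b → b ∈ C) ∧
  ∀ a ∈ C, ∀ b ∈ C,
    Relation.ReflTransGen (fun u v => u ∈ C ∧ v ∈ C ∧ faAdj n F u v) a b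

lemma Finpartition.sum_parts_sum {α M : Type*} [Fintype α] [DecidableEq α] [AddCommMonoid M]
    (π : Finpartition (univ : Finset α)) (f : α → M) :
    ∑ C ∈ π.parts, ∑ u ∈ C, f u = ∑ u, f u :=
  calc ∑ C ∈ π.parts, ∑ u ∈ C, f u = ∑ u ∈ π.parts.biUnion id, f u :=
        (sum_biUnion π.supIndep.pairwiseDisjoint).symm
    _ = ∑ u, f u := by rw [π.biUnion_parts]

namespace FriendsAppreciation

section FriendshipArcs

variable {α : Type*} (F : α → Finset α)

def friendGraph : SimpleGraph α := SimpleGraph.fromRel fun a b => b ∈ F a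

variable [DecidableEq α]

def innerArcs (C : Finset α) : ℕ := ∑ u ∈ C, #(C ∩ F u)

def pairArcs (x y : α) : ℕ := (if y ∈ F x then 1 else 0) + (if x ∈ F y then 1 else 0)

def degreeTo (x : α) (C : Finset α) : ℕ := ∑ y ∈ C, pairArcs F x y

lemma card_inter_eq_sum (C t : Finset α) : #(C ∩ t) = ∑ v ∈ C, if v ∈ t then 1 else 0 := by
  rw [← card_filter, filter_mem_eq_inter]

lemma pairArcs_comm (x y : α) : pairArcs F x y = pairArcs F y x := Nat.add_comm _ _

lemma pairArcs_self {x : α} (hx : x ∉ F x) : pairArcs F x x = 0 := by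
  simp [pairArcs, hx]

lemma degreeTo_erase_add {x y : α} {C : Finset α} (hy : y ∈ C) :
    degreeTo F x (C.erase y) + pairArcs F x y = degreeTo F x C :=
  sum_erase_add C _ hy

lemma degreeTo_eq (x : α) (C : Finset α) :
    degreeTo F x C = #(C ∩ F x) + ∑ y ∈ C, if x ∈ F y then 1 else 0 := by
  simp only [degreeTo, pairArcs, sum_add_distrib, card_inter_eq_sum]

lemma innerArcs_insert {x : α} {C : Finset α} (hxF : x ∉ F x) (hx : x ∉ C) :
    innerArcs F (insert x C) = innerArcs F C + degreeTo F x C := by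
  have hterm : ∀ u ∈ C, #(insert x C ∩ F u) = #(C ∩ F u) + if x ∈ F u then 1 else 0 := by
    intro u _
    split_ifs with hxu
    · rw [insert_inter_of_mem hxu, card_insert_of_notMem (by simp [hx])]
    · rw [insert_inter_of_notMem hxu, Nat.add_zero]
  rw [innerArcs, sum_insert hx, insert_inter_of_notMem hxF, sum_congr rfl hterm,
    sum_add_distrib, degreeTo_eq, innerArcs]
  ring

lemma sum_degreeTo_self (C : Finset α) : ∑ x ∈ C, degreeTo F x C = 2 * innerArcs F C := by
  simp only [degreeTo_eq, sum_add_distrib, innerArcs, card_inter_eq_sum]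
  rw [sum_comm (f := fun x y => if x ∈ F y then 1 else 0)]
  ring

lemma sum_degreeTo_comm (A B : Finset α) :
    ∑ x ∈ A, degreeTo F x B = ∑ y ∈ B, degreeTo F y A := by
  simp only [degreeTo]
  rw [sum_comm]
  simp only [pairArcs_comm F]

lemma sum_card_eq_innerArcs_add [Fintype α] {A B : Finset α} (hd : Disjoint A B)
    (hu : A ∪ B = univ) :
    ∑ u, #(F u) = innerArcs F A + innerArcs F B + ∑ y ∈ B, degreeTo F y A := by
  have hsplit : ∀ u, #(F u) = #(A ∩ F u) + #(B ∩ F u) := fun u => by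
    rw [← card_union_of_disjoint (hd.mono inter_subset_left inter_subset_left),
      ← union_inter_distrib_right, hu, univ_inter]
  have hcross : ∑ y ∈ B, degreeTo F y A = ∑ y ∈ B, #(A ∩ F y) + ∑ x ∈ A, #(B ∩ F x) := by
    simp only [degreeTo_eq, sum_add_distrib, card_inter_eq_sum B]
    rw [sum_comm (s := B)]
  rw [← hu, sum_union hd, hcross, innerArcs, innerArcs]
  simp only [hsplit, sum_add_distrib]
  ring

lemma innerArcs_eq_card_filter (C : Finset α) :
    innerArcs F C = #{p ∈ C ×ˢ C | p.2 ∈ F p.1} := by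
  rw [card_filter, sum_product, innerArcs]
  simp only [card_inter_eq_sum]

lemma natCard_edgeSet_induce_le (C : Finset α) :
    Nat.card ((friendGraph F).induce (C : Set α)).edgeSet ≤ innerArcs F C := by
  set D := {p ∈ C ×ˢ C | p.2 ∈ F p.1}
  set E := D.image (Sym2.mk (α := α)).uncurry
  have hmem : ∀ e ∈ ((friendGraph F).induce (C : Set α)).edgeSet, Sym2.map Subtype.val e ∈ E := by
    intro e he
    induction e using Sym2.ind with
    | h a b =>
      obtain ⟨-, hab | hba⟩ := he
      · exact mem_image.2 ⟨(a, b), by simpa [D] using hab, rfl⟩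
      · exact mem_image.2 ⟨(b, a), by simpa [D] using hba, Sym2.eq_swap⟩
  calc Nat.card ((friendGraph F).induce (C : Set α)).edgeSet
      ≤ Nat.card E :=
        Nat.card_le_card_of_injective (fun e => ⟨_, hmem e e.2⟩) fun e₁ e₂ h =>
          Subtype.ext (Sym2.map.injective Subtype.val_injective (Subtype.ext_iff.1 h))
    _ = #E := Nat.card_eq_finsetCard _
    _ ≤ #D := card_image_le
    _ = innerArcs F C := (innerArcs_eq_card_filter F C).symm

lemma card_le_innerArcs_add_one {C : Finset α}
    (hC : ((friendGraph F).induce (C : Set α)).Connected) : #C ≤ innerArcs F C + 1 := by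
  have := hC.card_vert_le_card_edgeSet_add_one
  rw [Nat.card_coe_set_eq, Set.ncard_coe_finset] at this
  linarith [natCard_edgeSet_induce_le F C]

/-- The swap inequality `d(j, A - i) + d(i, B - j) ≤ d(i, A - i) + d(j, B - j)`, with `i` and `j`
put back into `A` and `B` so that no subtraction occurs. -/
lemma degreeTo_add_le_of_innerArcs_swap_le (hF : ∀ x, x ∉ F x) {A B : Finset α}
    (hd : Disjoint A B) {i j : α} (hi : i ∈ A) (hj : j ∈ B)
    (h : innerArcs F (insert j (A.erase i)) + innerArcs F (insert i (B.erase j))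
      ≤ innerArcs F A + innerArcs F B) :
    degreeTo F j A + degreeTo F i B
      ≤ degreeTo F i A + degreeTo F j B + 2 * pairArcs F i j := by
  have hjA : j ∉ A.erase i := fun h' => disjoint_left.1 hd (mem_of_mem_erase h') hj
  have hiB : i ∉ B.erase j := fun h' => disjoint_left.1 hd hi (mem_of_mem_erase h')
  have hA : innerArcs F A = innerArcs F (A.erase i) + degreeTo F i (A.erase i) := by
    conv_lhs => rw [← insert_erase hi]
    exact innerArcs_insert F (hF i) (notMem_erase i A)
  have hB : innerArcs F B = innerArcs F (B.erase j) + degreeTo F j (B.erase j) := by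
    conv_lhs => rw [← insert_erase hj]
    exact innerArcs_insert F (hF j) (notMem_erase j B)
  rw [innerArcs_insert F (hF j) hjA, innerArcs_insert F (hF i) hiB, hA, hB] at h
  have hjA' := degreeTo_erase_add F (x := j) hi
  have hiB' := degreeTo_erase_add F (x := i) hj
  have hiA' := degreeTo_erase_add F (x := i) hi
  have hjB' := degreeTo_erase_add F (x := j) hj
  rw [pairArcs_self F (hF i)] at hiA'
  rw [pairArcs_self F (hF j)] at hjB'
  rw [pairArcs_comm F j i] at hjA'
  omega

lemma card_add_card_mul_le {A B : Finset α}
    (hpair : ∀ i ∈ A, ∀ j ∈ B, degreeTo F j A + degreeTo F i B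
      ≤ degreeTo F i A + degreeTo F j B + 2 * pairArcs F i j) :
    (#A + #B) * ∑ j ∈ B, degreeTo F j A
      ≤ 2 * #B * innerArcs F A + 2 * #A * innerArcs F B + 2 * ∑ j ∈ B, degreeTo F j A := by
  have h := sum_le_sum fun i hi => sum_le_sum fun j hj => hpair i hi j hj
  simp only [sum_add_distrib, sum_const, smul_eq_mul, ← mul_sum] at h
  rw [sum_degreeTo_comm F A B, sum_degreeTo_self, sum_degreeTo_self,
    show ∑ i ∈ A, ∑ j ∈ B, pairArcs F i j = ∑ j ∈ B, degreeTo F j A from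
      sum_degreeTo_comm F A B] at h
  linarith

lemma card_sub_two_mul_sum_card_le [Fintype α] (hF : ∀ x, x ∉ F x) {A B : Finset α}
    (hd : Disjoint A B) (hu : A ∪ B = univ)
    (hA : 2 * #A ≤ Fintype.card α + 1) (hB : 2 * #B ≤ Fintype.card α + 1)
    (hswap : ∀ i ∈ A, ∀ j ∈ B,
      innerArcs F (insert j (A.erase i)) + innerArcs F (insert i (B.erase j))
        ≤ innerArcs F A + innerArcs F B) :
    ((Fintype.card α : ℚ) - 2) * ∑ u, #(F u)
      ≤ (2 * Fintype.card α - 1) * (innerArcs F A + innerArcs F B) := by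
  set N := Fintype.card α
  set X := ∑ j ∈ B, degreeTo F j A
  have hN : #A + #B = N := by rw [← card_union_of_disjoint hd, hu, card_univ]
  have hcount := card_add_card_mul_le F fun i hi j hj =>
    degreeTo_add_le_of_innerArcs_swap_le F hF hd hi hj (hswap i hi j hj)
  have hcut : N * X ≤ (N + 1) * (innerArcs F A + innerArcs F B) + 2 * X :=
    calc N * X = (#A + #B) * X := by rw [hN]
      _ ≤ 2 * #B * innerArcs F A + 2 * #A * innerArcs F B + 2 * X := hcount
      _ ≤ (N + 1) * (innerArcs F A + innerArcs F B) + 2 * X := by rw [mul_add]; gcongr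
  rw [sum_card_eq_innerArcs_add F hd hu, Nat.cast_add, Nat.cast_add]
  linear_combination (by exact_mod_cast hcut :
    (N : ℚ) * X ≤ (N + 1) * (innerArcs F A + innerArcs F B) + 2 * X)

end FriendshipArcs

lemma _root_.IsComponent.connected_induce {n : ℕ} {F : Fin n → Finset (Fin n)}
    {P C : Finset (Fin n)} (h : IsComponent n F P C) :
    ((friendGraph F).induce (C : Set (Fin n))).Connected := by
  obtain ⟨-, ⟨r, hr⟩, -, hconn⟩ := h
  have : Nonempty (C : Set (Fin n)) := ⟨⟨r, hr⟩⟩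
  refine ⟨fun ⟨a, ha⟩ ⟨b, hb⟩ => ?_⟩
  induction hconn a ha b hb with
  | refl => rfl
  -- `faAdj n F` is by definition the adjacency relation of `friendGraph F`.
  | tail _ hcb ih => exact (ih hcb.1).trans (SimpleGraph.Adj.reachable hcb.2.2)

section Welfare

variable {n : ℕ} (F : Fin n → Finset (Fin n))

lemma faUtil_eq (hn : n ≠ 0) {i : Fin n} {C : Finset (Fin n)} (hi : i ∈ C) (hiF : i ∉ F i) :
    faUtil n (F i) i C = ((n + 1) * #(C ∩ F i) - (#C - 1)) / n := by
  have hsplit := card_sdiff_add_card_inter C (F i ∪ {i})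
  rw [inter_union_distrib_left, inter_singleton_of_mem hi,
    card_union_of_disjoint (disjoint_singleton_right.2 fun h => hiF (mem_inter.1 h).2),
    card_singleton] at hsplit
  have hsplit' : (#(C \ (F i ∪ {i})) : ℚ) = #C - 1 - #(C ∩ F i) := by
    rw [← hsplit]; push_cast; ring
  rw [faUtil, hsplit']
  field_simp
  ring

lemma sum_faUtil_eq (hn : n ≠ 0) (hF : ∀ j, j ∉ F j) (C : Finset (Fin n)) :
    ∑ i ∈ C, faUtil n (F i) i C = ((n + 1) * innerArcs F C - (#C ^ 2 - #C)) / n := by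
  rw [sum_congr rfl fun i hi => faUtil_eq F hn hi (hF i), ← sum_div, sum_sub_distrib,
    ← mul_sum, sum_const, innerArcs]
  push_cast
  ring

lemma innerArcs_swap_le_of_faSW2_le (hn : n ≠ 0) (hF : ∀ j, j ∉ F j) {A B : Finset (Fin n)}
    (hd : Disjoint A B) {i j : Fin n} (hi : i ∈ A) (hj : j ∈ B)
    (h : faSW2 n F (insert j (A.erase i)) (insert i (B.erase j)) ≤ faSW2 n F A B) :
    innerArcs F (insert j (A.erase i)) + innerArcs F (insert i (B.erase j))
      ≤ innerArcs F A + innerArcs F B := by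
  have hcA : #(insert j (A.erase i)) = #A := by
    rw [card_insert_of_notMem fun h' => disjoint_left.1 hd (mem_of_mem_erase h') hj,
      card_erase_add_one hi]
  have hcB : #(insert i (B.erase j)) = #B := by
    rw [card_insert_of_notMem fun h' => disjoint_left.1 hd hi (mem_of_mem_erase h'),
      card_erase_add_one hj]
  rw [faSW2, faSW2, sum_faUtil_eq F hn hF, sum_faUtil_eq F hn hF, sum_faUtil_eq F hn hF,
    sum_faUtil_eq F hn hF, hcA, hcB, ← add_div, ← add_div,
    div_le_div_iff_of_pos_right (by positivity)] at h
  have h' : ((n : ℚ) + 1) *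
        (innerArcs F (insert j (A.erase i)) + innerArcs F (insert i (B.erase j)))
      ≤ ((n : ℚ) + 1) * (innerArcs F A + innerArcs F B) := by linarith
  exact_mod_cast le_of_mul_le_mul_left h' (by positivity)

lemma faSW_le_sum_card (σ : Finpartition (univ : Finset (Fin n))) :
    faSW n F σ ≤ (∑ u, #(F u) : ℕ) := by
  rw [Nat.cast_sum, ← σ.sum_parts_sum]
  refine sum_le_sum fun C _ => sum_le_sum fun i _ => ?_
  have hfriends : (#(C ∩ F i) : ℚ) ≤ #(F i) := by exact_mod_cast card_le_card inter_subset_right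
  rw [faUtil]
  linarith [show (0 : ℚ) ≤ #(C \ (F i ∪ {i})) / n by positivity]

lemma card_inter_le_of_isComponent (hF : ∀ j, j ∉ F j) {P C : Finset (Fin n)}
    (hC : IsComponent n F P C) {u : Fin n} (hu : u ∈ C) : #(P ∩ F u) ≤ #(C ∩ F u) := by
  refine card_le_card fun v hv => ?_
  rw [mem_inter] at hv ⊢
  exact ⟨hC.2.2.1 u hu v hv.1 ⟨fun huv => hF u (huv ▸ hv.2), Or.inl hv.2⟩, hv.2⟩

lemma innerArcs_add_le_sum_parts (hF : ∀ j, j ∉ F j) {A B : Finset (Fin n)} (hd : Disjoint A B)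
    (hu : A ∪ B = univ) (π : Finpartition (univ : Finset (Fin n)))
    (hπ : ∀ C ∈ π.parts, IsComponent n F A C ∨ IsComponent n F B C) :
    innerArcs F A + innerArcs F B ≤ ∑ C ∈ π.parts, innerArcs F C := by
  classical
  let side : Fin n → Finset (Fin n) := fun u => if u ∈ A then A else B
  have hside : innerArcs F A + innerArcs F B = ∑ u, #(side u ∩ F u) := by
    rw [← hu, sum_union hd, innerArcs, innerArcs]
    congr 1 <;> refine sum_congr rfl fun u hu' => ?_
    · simp [side, hu']
    · simp [side, disjoint_right.1 hd hu']
  rw [hside, ← π.sum_parts_sum]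
  refine sum_le_sum fun C hC => sum_le_sum fun u hu' => ?_
  rcases hπ C hC with hCA | hCB
  · simpa [side, hCA.1 hu'] using card_inter_le_of_isComponent F hF hCA hu'
  · simpa [side, disjoint_right.1 hd (hCB.1 hu')] using card_inter_le_of_isComponent F hF hCB hu'

lemma mul_innerArcs_le_sum_faUtil (hn : n ≠ 0) (hF : ∀ j, j ∉ F j) {C : Finset (Fin n)}
    (hconn : #C ≤ innerArcs F C + 1) (hsize : 2 * #C ≤ n + 1) :
    ((n : ℚ) + 1) * innerArcs F C ≤ 2 * n * ∑ i ∈ C, faUtil n (F i) i C := by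
  rw [sum_faUtil_eq F hn hF,
    show ∀ x : ℚ, 2 * n * (x / n) = 2 * x from fun x => by field_simp]
  have hconn' : (#C : ℚ) ≤ innerArcs F C + 1 := by exact_mod_cast hconn
  have hsize' : 2 * (#C : ℚ) ≤ n + 1 := by exact_mod_cast hsize
  nlinarith [mul_le_mul_of_nonneg_right hsize' (Nat.cast_nonneg (innerArcs F C)),
    mul_le_mul_of_nonneg_left hconn' (Nat.cast_nonneg #C)]

lemma mul_sum_innerArcs_le_faSW (hn : n ≠ 0) (hF : ∀ j, j ∉ F j) {P₁ P₂ : Finset (Fin n)}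
    (hP₁ : 2 * #P₁ ≤ n + 1) (hP₂ : 2 * #P₂ ≤ n + 1) (π : Finpartition (univ : Finset (Fin n)))
    (hπ : ∀ C ∈ π.parts, IsComponent n F P₁ C ∨ IsComponent n F P₂ C) :
    ((n : ℚ) + 1) * ∑ C ∈ π.parts, (innerArcs F C : ℚ) ≤ 2 * n * faSW n F π := by
  rw [faSW, mul_sum, mul_sum]
  refine sum_le_sum fun C hC => mul_innerArcs_le_sum_faUtil F hn hF ?_ ?_
  · rcases hπ C hC with h | h <;> exact card_le_innerArcs_add_one F h.connected_induce
  · rcases hπ C hC with h | h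
    · exact (Nat.mul_le_mul_left 2 (card_le_card h.1)).trans hP₁
    · exact (Nat.mul_le_mul_left 2 (card_le_card h.1)).trans hP₂

lemma mul_faSW_le_of_swapStable (hn : 2 ≤ n) (hF : ∀ j, j ∉ F j) {P₁ P₂ : Finset (Fin n)}
    (hd : Disjoint P₁ P₂) (hu : P₁ ∪ P₂ = univ) (hP₁ : 2 * #P₁ ≤ n + 1) (hP₂ : 2 * #P₂ ≤ n + 1)
    (hswap : ∀ i ∈ P₁, ∀ j ∈ P₂,
      faSW2 n F (insert j (P₁.erase i)) (insert i (P₂.erase j)) ≤ faSW2 n F P₁ P₂)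
    (π : Finpartition (univ : Finset (Fin n)))
    (hπ : ∀ C ∈ π.parts, IsComponent n F P₁ C ∨ IsComponent n F P₂ C)
    (σ : Finpartition (univ : Finset (Fin n))) :
    ((n : ℚ) + 1) * (n - 2) * faSW n F σ ≤ 2 * n * (2 * n - 1) * faSW n F π := by
  have hn0 : n ≠ 0 := by omega
  have hcut := card_sub_two_mul_sum_card_le F hF hd hu (by rwa [Fintype.card_fin])
    (by rwa [Fintype.card_fin])
    fun i hi j hj => innerArcs_swap_le_of_faSW2_le F hn0 hF hd hi hj (hswap i hi j hj)
  rw [Fintype.card_fin] at hcut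
  have hcover : (innerArcs F P₁ + innerArcs F P₂ : ℚ) ≤ ∑ C ∈ π.parts, (innerArcs F C : ℚ) := by
    exact_mod_cast innerArcs_add_le_sum_parts F hF hd hu π hπ
  have hπ_lower := mul_sum_innerArcs_le_faSW F hn0 hF hP₁ hP₂ π hπ
  have hn' : (2 : ℚ) ≤ n := by exact_mod_cast hn
  calc ((n : ℚ) + 1) * (n - 2) * faSW n F σ
      ≤ (n + 1) * ((n - 2) * (∑ u, #(F u) : ℕ)) := by
        rw [mul_assoc]
        exact mul_le_mul_of_nonneg_left
          (mul_le_mul_of_nonneg_left (faSW_le_sum_card F σ) (by linarith)) (by positivity)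
    _ ≤ (n + 1) * ((2 * n - 1) * (innerArcs F P₁ + innerArcs F P₂)) := by gcongr
    _ ≤ (2 * n - 1) * ((n + 1) * ∑ C ∈ π.parts, (innerArcs F C : ℚ)) := by
        rw [mul_left_comm]; gcongr; linarith
    _ ≤ (2 * n - 1) * (2 * n * faSW n F π) := by gcongr; linarith
    _ = 2 * n * (2 * n - 1) * faSW n F π := by ring

end Welfare

/-- The bound amounts to `ε (n + 1)(n - 2) ≥ 2n + 8`, which `ε n ≥ 6` and `n ≥ 5` guarantee. -/
lemma two_mul_mul_le_four_add_mul {ε : ℚ} (hε : 0 < ε) {n : ℕ} (hn : ⌈6 / ε⌉₊ + 5 ≤ n) :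
    2 * n * (2 * n - 1) ≤ (4 + ε) * ((n + 1) * (n - 2)) := by
  have hεn : 6 ≤ ε * n := by
    have h : 6 / ε ≤ n := (Nat.le_ceil _).trans (by exact_mod_cast (by omega : ⌈6 / ε⌉₊ ≤ n))
    rw [div_le_iff₀ hε] at h
    linarith
  have hn5 : (5 : ℚ) ≤ n := by exact_mod_cast (by omega : 5 ≤ n)
  nlinarith [mul_le_mul_of_nonneg_right hεn (by linarith : (0 : ℚ) ≤ n - 2),
    mul_nonneg hε.le (by linarith : (0 : ℚ) ≤ n - 2)]

end FriendsAppreciation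

open FriendsAppreciation

/-- For every `ε > 0` there is `N₀` such that for all FA games with `n ≥ N₀` agents:
if `{P₁, P₂}` is a swap-stable partition with `|P₁| = ⌈n/2⌉`, `|P₂| = ⌊n/2⌋`, and `π`
is the partition into weakly connected components of the friendship graph restricted
to `P₁` and to `P₂`, then `SW(σ) ≤ (4 + ε)·SW(π)` for every partition `σ`. -/
theorem stmt15 :
    ∀ ε : ℚ, 0 < ε → ∃ N₀ : ℕ, ∀ n : ℕ, N₀ ≤ n →
      ∀ F : Fin n → Finset (Fin n), (∀ j, j ∉ F j) →
        ∀ P₁ P₂ : Finset (Fin n), Disjoint P₁ P₂ → P₁ ∪ P₂ = univ →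
          P₁.card = (n + 1) / 2 → P₂.card = n / 2 →
          (∀ i ∈ P₁, ∀ j ∈ P₂,
            faSW2 n F (insert j (P₁.erase i)) (insert i (P₂.erase j)) ≤ faSW2 n F P₁ P₂) →
          ∀ π : Finpartition (univ : Finset (Fin n)),
            (∀ C ∈ π.parts, IsComponent n F P₁ C ∨ IsComponent n F P₂ C) →
            ∀ σ : Finpartition (univ : Finset (Fin n)),
              faSW n F σ ≤ (4 + ε) * faSW n F π := by
  intro ε hε
  refine ⟨⌈6 / ε⌉₊ + 5, fun n hn F hF P₁ P₂ hd hu h₁ h₂ hswap π hπ σ => ?_⟩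
  have hP₁ : 2 * #P₁ ≤ n + 1 := by omega
  have hP₂ : 2 * #P₂ ≤ n + 1 := by omega
  have hπ_nonneg : 0 ≤ faSW n F π := by
    have hn0 : (0 : ℚ) < n := by exact_mod_cast (by omega : 0 < n)
    refine nonneg_of_mul_nonneg_right ?_ (mul_pos two_pos hn0)
    exact (by positivity : (0 : ℚ) ≤ (n + 1) * ∑ C ∈ π.parts, (innerArcs F C : ℚ)).trans
      (mul_sum_innerArcs_le_faSW F (by omega) hF hP₁ hP₂ π hπ)
  have hσ := mul_faSW_le_of_swapStable F (by omega) hF hd hu hP₁ hP₂ hswap π hπ σ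
  have hpos : (0 : ℚ) < (n + 1) * (n - 2) := by
    have : (5 : ℚ) ≤ n := by exact_mod_cast (by omega : 5 ≤ n)
    nlinarith
  refine le_of_mul_le_mul_left ?_ hpos
  calc ((n : ℚ) + 1) * (n - 2) * faSW n F σ ≤ 2 * n * (2 * n - 1) * faSW n F π := hσ
    _ ≤ (4 + ε) * ((n + 1) * (n - 2)) * faSW n F π :=
        mul_le_mul_of_nonneg_right (two_mul_mul_le_four_add_mul hε hn) hπ_nonneg
    _ = (n + 1) * (n - 2) * ((4 + ε) * faSW n F π) := by ring
end

section
/- For Enemies Aversion (EA) preferences with n ≥ 4 agents, no mechanism M that outputs, for every declaration profile d, a partition maximizing the EA social welfare of the game induced by d is non-obviously manipulable; specifically, there exist an agent i, a true type t_i, and a false declaration d_i such that min_{π ∈ Π_i(d_i,M)} u_i(π) > min_{π ∈ Π_i(t_i,M)} u_i(π) (Condition 2 of NOM is violated). -/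
open Finset

/-- EA utility of agent `i` with friend set `t` for a coalition `C` containing her:
`u_i(C) = |C ∩ F_i| / n − |C ∩ E_i|`, where `E_i = N \ (F_i ∪ {i})`. -/
def eaUtil (n : ℕ) (t : Finset (Fin n)) (i : Fin n) (C : Finset (Fin n)) : ℚ :=
  ((C ∩ t).card : ℚ) / (n : ℚ) - ((C \ (t ∪ {i})).card : ℚ)

/-- EA social welfare of a partition, where agent `j` declares the friend set `F j`. -/
def eaSW (n : ℕ) (F : Fin n → Finset (Fin n))
    (π : Finpartition (univ : Finset (Fin n))) : ℚ :=
  ∑ C ∈ π.parts, ∑ i ∈ C, eaUtil n (F i) i C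

/-- EA utility of agent `i` (with true friend set `t`) for the coalition of `i` in `π`:
since `i` lies in exactly one part, this sum equals `u_i(π(i))`. -/
def eaAgentUtil (n : ℕ) (t : Finset (Fin n)) (i : Fin n)
    (π : Finpartition (univ : Finset (Fin n))) : ℚ :=
  ∑ C ∈ π.parts.filter (fun C => i ∈ C), eaUtil n t i C

/-! If everybody but agent `i` declares everybody a friend and `i` declares all agents but
`e`, the grand coalition has welfare `(n² - 2n - 1)/n`, while a partition separating two agents
has welfare at most `(n² - 3n + 2)/n`. For `n ≥ 4` every optimal partition therefore puts `i`
together with her enemy `e`, so the truthful `i` gets negative utility. If instead `i` declares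
no friends, splitting her off her coalition gains her at least `1` and costs each of the other
`n - 1` agents at most `1/n`, so every optimal partition leaves her alone, with utility `0`. -/

namespace Finpartition

variable {α : Type*} [DecidableEq α]

theorem sum_sum_parts_eq_sum_part {s : Finset α} (P : Finpartition s) {M : Type*}
    [AddCommMonoid M] (f : α → Finset α → M) :
    ∑ C ∈ P.parts, ∑ j ∈ C, f j C = ∑ j ∈ s, f j (P.part j) := by
  have h := sum_biUnion P.disjoint (f := fun j => f j (P.part j))
  rw [P.biUnion_parts] at h
  rw [h]
  exact sum_congr rfl fun C hC => sum_congr rfl fun j hj => by rw [P.part_eq_of_mem hC hj]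

theorem sum_card_part_le {s : Finset α} (P : Finpartition s) {A : Finset α} (hA : A ∈ P.parts) :
    ∑ j ∈ s, #(P.part j) ≤ #A ^ 2 + #(s \ A) ^ 2 := by
  have h_out : ∀ j ∈ s \ A, P.part j ⊆ s \ A := fun j hj => by
    obtain ⟨hjs, hjA⟩ := mem_sdiff.1 hj
    refine subset_sdiff.2 ⟨P.part_subset j, P.disjoint (P.part_mem.2 hjs) hA ?_⟩
    exact fun h => hjA (h ▸ P.mem_part_self.2 hjs)
  rw [← Finset.sum_sdiff (f := fun j => #(P.part j)) (P.subset hA), add_comm, sq, sq]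
  refine add_le_add (le_of_eq ?_) ?_
  · rw [sum_congr rfl fun j hj => congrArg card (P.part_eq_of_mem hA hj), sum_const, smul_eq_mul]
  · exact (sum_le_card_nsmul _ _ _ fun j hj => card_le_card (h_out j hj)).trans_eq (smul_eq_mul ..)

variable [Fintype α]

open Classical in
noncomputable def isolate (P : Finpartition (univ : Finset α)) (i : α) :
    Finpartition (univ : Finset α) :=
  ofSetoid (Setoid.ker fun x => if x = i then none else some (P.part x))

theorem mem_part_isolate_iff (P : Finpartition (univ : Finset α)) {i x y : α} :
    y ∈ (P.isolate i).part x ↔ (x = i ↔ y = i) ∧ (x ≠ i → y ∈ P.part x) := by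
  classical
  rw [isolate, mem_part_ofSetoid_iff_rel, Setoid.ker_def]
  by_cases hx : x = i <;> by_cases hy : y = i <;>
    simp [hx, hy, P.mem_part_iff_part_eq_part (mem_univ _) (mem_univ _), eq_comm]

theorem part_isolate_self (P : Finpartition (univ : Finset α)) (i : α) :
    (P.isolate i).part i = {i} := by
  ext y
  simp [mem_part_isolate_iff, eq_comm]

theorem part_isolate_of_ne (P : Finpartition (univ : Finset α)) {i x : α} (hx : x ≠ i) :
    (P.isolate i).part x = (P.part x).erase i := by
  ext y
  simp only [mem_part_isolate_iff, mem_erase]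
  tauto

end Finpartition

section EnemiesAversion

variable {n : ℕ}

theorem eaSW_eq_sum_part (d : Fin n → Finset (Fin n))
    (π : Finpartition (univ : Finset (Fin n))) :
    eaSW n d π = ∑ j, eaUtil n (d j) j (π.part j) :=
  π.sum_sum_parts_eq_sum_part fun j C => eaUtil n (d j) j C

theorem eaAgentUtil_eq_eaUtil_part (t : Finset (Fin n)) (i : Fin n)
    (π : Finpartition (univ : Finset (Fin n))) :
    eaAgentUtil n t i π = eaUtil n t i (π.part i) := by
  have h : π.parts.filter (fun C => i ∈ C) = {π.part i} := by
    ext C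
    simp only [mem_filter, mem_singleton]
    constructor
    · rintro ⟨hC, hiC⟩
      exact (π.part_eq_of_mem hC hiC).symm
    · rintro rfl
      exact ⟨π.part_mem.2 (mem_univ i), π.mem_part_self.2 (mem_univ i)⟩
  rw [eaAgentUtil, h, sum_singleton]

theorem eaUtil_singleton_self {F : Finset (Fin n)} {i : Fin n} (hi : i ∉ F) :
    eaUtil n F i {i} = 0 := by
  rw [eaUtil, singleton_inter_of_notMem hi, sdiff_eq_empty_iff_subset.2 subset_union_right]
  simp

theorem eaUtil_empty (i : Fin n) (C : Finset (Fin n)) : eaUtil n ∅ i C = -#(C.erase i) := by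
  rw [eaUtil, inter_empty, empty_union, ← erase_eq]
  simp

theorem eaUtil_univ {F : Finset (Fin n)} {j : Fin n} (hj : j ∉ F) :
    eaUtil n F j univ = #F / n - (n - 1 - #F) := by
  have hcard : #(univ \ (F ∪ {j})) + (#F + 1) = n := by
    rw [← card_singleton j, ← card_union_of_disjoint (disjoint_singleton_right.2 hj),
      card_sdiff_add_card_eq_card (subset_univ _), card_univ, Fintype.card_fin]
  rw [eaUtil, univ_inter]
  have : (#(univ \ (F ∪ {j})) : ℚ) + (#F + 1) = n := by exact_mod_cast hcard
  linarith

theorem eaUtil_le_of_notMem {F C : Finset (Fin n)} {j : Fin n} (hj : j ∈ C) (hjF : j ∉ F) :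
    eaUtil n F j C ≤ (#C - 1) / n := by
  have hfriends : #(C ∩ F) ≤ #(C.erase j) :=
    card_le_card fun x hx =>
      mem_erase.2 ⟨fun h => hjF (h ▸ (mem_inter.1 hx).2), (mem_inter.1 hx).1⟩
  have hfriendsq : (#(C ∩ F) : ℚ) ≤ #C - 1 := by
    rw [← cast_card_erase_of_mem hj]
    exact_mod_cast hfriends
  calc eaUtil n F j C ≤ #(C ∩ F) / n := by
        rw [eaUtil]
        exact sub_le_self _ (Nat.cast_nonneg _)
    _ ≤ (#C - 1) / n := div_le_div_of_nonneg_right hfriendsq (Nat.cast_nonneg _)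

theorem eaUtil_neg_of_enemy_mem {F C : Finset (Fin n)} {i e : Fin n} (he : e ∈ C) (heF : e ∉ F)
    (hei : e ≠ i) : eaUtil n F i C < 0 := by
  have hn : (0 : ℚ) < n := by exact_mod_cast i.pos
  have hfriends : (#(C ∩ F) : ℚ) / n < 1 := by
    rw [div_lt_one hn]
    have := card_lt_univ_of_notMem (fun h => heF (mem_inter.1 h).2 : e ∉ C ∩ F)
    rw [Fintype.card_fin] at this
    exact_mod_cast this
  have henemies : (1 : ℚ) ≤ #(C \ (F ∪ {i})) := by
    have : e ∈ C \ (F ∪ {i}) := by simp [he, heF, hei]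
    exact_mod_cast card_pos.2 ⟨e, this⟩
  rw [eaUtil]
  linarith

theorem eaUtil_le_eaUtil_erase_add (F C : Finset (Fin n)) (i j : Fin n) :
    eaUtil n F j C ≤ eaUtil n F j (C.erase i) + 1 / n := by
  have hfriends : #(C ∩ F) ≤ #(C.erase i ∩ F) + 1 := by
    rw [erase_inter]
    exact Nat.le_add_of_sub_le pred_card_le_card_erase
  have henemies : #(C.erase i \ (F ∪ {j})) ≤ #(C \ (F ∪ {j})) :=
    card_le_card (sdiff_subset_sdiff (erase_subset i C) subset_rfl)
  have hfriendsq : (#(C ∩ F) : ℚ) / n ≤ #(C.erase i ∩ F) / n + 1 / n := by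
    rw [← add_div]
    exact div_le_div_of_nonneg_right (by exact_mod_cast hfriends) (Nat.cast_nonneg _)
  have henemiesq : (#(C.erase i \ (F ∪ {j})) : ℚ) ≤ #(C \ (F ∪ {j})) := by
    exact_mod_cast henemies
  rw [eaUtil, eaUtil]
  linarith

end EnemiesAversion

section Welfare

variable {n : ℕ} {d : Fin n → Finset (Fin n)} {π : Finpartition (univ : Finset (Fin n))}

theorem eaSW_le_sum_card_part (hd : ∀ j, j ∉ d j) :
    eaSW n d π ≤ ((∑ j, #(π.part j) : ℕ) - n) / n := by
  rw [eaSW_eq_sum_part]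
  calc ∑ j, eaUtil n (d j) j (π.part j) ≤ ∑ j, ((#(π.part j) : ℚ) - 1) / n :=
        sum_le_sum fun j _ => eaUtil_le_of_notMem (π.mem_part_self.2 (mem_univ j)) (hd j)
    _ = _ := by rw [← sum_div, sum_sub_distrib]; simp

theorem eaSW_le_of_notMem_part (hd : ∀ j, j ∉ d j) {j k : Fin n} (hk : k ∉ π.part j) :
    eaSW n d π ≤ ((n : ℚ) ^ 2 - 3 * n + 2) / n := by
  set A := π.part j
  have hsum : ((∑ j, #(π.part j) : ℕ) : ℚ) ≤ #A ^ 2 + #(univ \ A) ^ 2 := by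
    exact_mod_cast π.sum_card_part_le (π.part_mem.2 (mem_univ j))
  have hsplit : (#(univ \ A) : ℚ) + #A = n := by
    exact_mod_cast (card_sdiff_add_card_eq_card (subset_univ A)).trans (card_fin n)
  have ha : (1 : ℚ) ≤ #A := by
    exact_mod_cast card_pos.2 ⟨j, π.mem_part_self.2 (mem_univ j)⟩
  have hb : (1 : ℚ) ≤ #(univ \ A) := by exact_mod_cast card_pos.2 ⟨k, by simp [hk]⟩
  refine (eaSW_le_sum_card_part hd).trans (div_le_div_of_nonneg_right ?_ (Nat.cast_nonneg _))
  nlinarith [mul_nonneg (sub_nonneg.2 ha) (sub_nonneg.2 hb)]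

theorem mem_part_of_forall_eaSW_le (hd : ∀ j, j ∉ d j)
    (hopt : ∀ σ, eaSW n d σ ≤ eaSW n d π) {σ : Finpartition (univ : Finset (Fin n))}
    (hσ : ((n : ℚ) ^ 2 - 3 * n + 2) / n < eaSW n d σ)
    (j k : Fin n) : k ∈ π.part j :=
  by_contra fun hk => ((hopt σ).trans (eaSW_le_of_notMem_part hd hk)).not_gt hσ

theorem eaSW_lt_eaSW_isolate {i : Fin n} (hdi : d i = ∅) (hi : π.part i ≠ {i}) :
    eaSW n d π < eaSW n d (π.isolate i) := by
  have hn : (0 : ℚ) < n := by exact_mod_cast i.pos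
  have hleave : eaUtil n ∅ i (π.part i) ≤ -1 := by
    rw [eaUtil_empty, neg_le_neg_iff, Nat.one_le_cast, one_le_card, nonempty_iff_ne_empty, Ne,
      erase_eq_empty_iff, not_or]
    exact ⟨(π.part_nonempty.2 (mem_univ i)).ne_empty, hi⟩
  have hothers : ∑ j ∈ univ.erase i, eaUtil n (d j) j (π.part j) ≤
      ∑ j ∈ univ.erase i, eaUtil n (d j) j ((π.isolate i).part j) + #(univ.erase i) / n := by
    rw [div_eq_mul_one_div, ← nsmul_eq_mul, ← sum_const, ← sum_add_distrib]
    refine sum_le_sum fun j hj => ?_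
    rw [π.part_isolate_of_ne (ne_of_mem_erase hj)]
    exact eaUtil_le_eaUtil_erase_add _ _ _ _
  have hcard : (#(univ.erase i) : ℚ) / n < 1 := by
    rw [div_lt_one hn]
    exact_mod_cast (card_erase_lt_of_mem (mem_univ i)).trans_eq (card_fin n)
  rw [eaSW_eq_sum_part, eaSW_eq_sum_part, ← add_sum_erase _ _ (mem_univ i),
    ← add_sum_erase _ _ (mem_univ i), π.part_isolate_self, hdi,
    eaUtil_singleton_self (notMem_empty i)]
  linarith

theorem part_eq_singleton_of_forall_eaSW_le {i : Fin n} (hdi : d i = ∅)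
    (hopt : ∀ σ, eaSW n d σ ≤ eaSW n d π) : π.part i = {i} :=
  by_contra fun hi => (hopt _).not_gt (eaSW_lt_eaSW_isolate hdi hi)

theorem eaSW_update_indiscrete {i : Fin n} {t : Finset (Fin n)} (hi : i ∉ t)
    (h : (univ : Finset (Fin n)) ≠ ⊥) :
    eaSW n (Function.update (fun j => univ.erase j) i t) (Finpartition.indiscrete h) =
      ((n : ℚ) - 1) ^ 2 / n + (#t / n - (n - 1 - #t)) := by
  have hothers : ∀ j ∈ univ.erase i,
      eaUtil n (Function.update (fun j => univ.erase j) i t j) j univ = ((n : ℚ) - 1) / n := by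
    intro j hj
    rw [Function.update_of_ne (ne_of_mem_erase hj), eaUtil_univ (notMem_erase j univ),
      cast_card_erase_of_mem (mem_univ j), card_univ, Fintype.card_fin]
    ring
  rw [eaSW, Finpartition.indiscrete_parts, sum_singleton, ← add_sum_erase _ _ (mem_univ i),
    Function.update_self, eaUtil_univ hi, sum_congr rfl hothers, sum_const, nsmul_eq_mul,
    cast_card_erase_of_mem (mem_univ i), card_univ, Fintype.card_fin]
  ring

end Welfare

/-- For EA preferences with `n ≥ 4` agents, no welfare-maximizing mechanism is NOM:
there are an agent `i`, a true type `t` and a false declaration `di` that obviously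
manipulates, i.e. `min_{π ∈ Π_i(di,M)} u_i(π) > min_{π ∈ Π_i(t,M)} u_i(π)` (witnessed by
a truthful outcome strictly below every outcome reachable by declaring `di`). -/
theorem stmt16 (n : ℕ) (hn : 4 ≤ n)
    (M : (Fin n → Finset (Fin n)) → Finpartition (univ : Finset (Fin n)))
    (hM : ∀ d : Fin n → Finset (Fin n), (∀ j, j ∉ d j) →
      ∀ σ : Finpartition (univ : Finset (Fin n)), eaSW n d σ ≤ eaSW n d (M d)) :
    ∃ (i : Fin n) (t di : Finset (Fin n)), i ∉ t ∧ i ∉ di ∧ di ≠ t ∧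
      ∃ d' : Fin n → Finset (Fin n), (∀ j, j ∉ d' j) ∧ d' i = t ∧
        ∀ d : Fin n → Finset (Fin n), (∀ j, j ∉ d j) → d i = di →
          eaAgentUtil n t i (M d') < eaAgentUtil n t i (M d) := by
  let i : Fin n := ⟨0, by omega⟩
  let e : Fin n := ⟨1, by omega⟩
  have hei : e ≠ i := by simp [i, e, Fin.ext_iff]
  let t : Finset (Fin n) := {i, e}ᶜ
  have hit : i ∉ t := by simp [t]
  have het : e ∉ t := by simp [t]
  have ht : (#t : ℚ) = n - 2 := by
    rw [card_compl, card_pair hei.symm, Fintype.card_fin, Nat.cast_sub (by omega)]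
    norm_num
  let d' := Function.update (fun j => univ.erase j) i t
  have hd' : ∀ j, j ∉ d' j := fun j => by
    by_cases hj : j = i
    · simpa [d', hj] using hit
    · simp [d', hj]
  have hne : (univ : Finset (Fin n)) ≠ ⊥ := (univ_nonempty_iff.2 ⟨i⟩).ne_empty
  have hn' : (4 : ℚ) ≤ n := by exact_mod_cast hn
  have hgrand : ((n : ℚ) ^ 2 - 3 * n + 2) / n < eaSW n d' (Finpartition.indiscrete hne) := by
    rw [eaSW_update_indiscrete hit hne, ht, ← sub_pos]
    field_simp
    nlinarith
  have he : e ∈ (M d').part i := mem_part_of_forall_eaSW_le hd' (hM d' hd') hgrand i e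
  refine ⟨i, t, ∅, hit, notMem_empty i, ?_, d', hd', Function.update_self ..,
    fun d hd hdi => ?_⟩
  · intro h
    rw [← h, card_empty, Nat.cast_zero] at ht
    linarith
  rw [eaAgentUtil_eq_eaUtil_part, eaAgentUtil_eq_eaUtil_part,
    part_eq_singleton_of_forall_eaSW_le hdi (hM d hd), eaUtil_singleton_self hit]
  exact eaUtil_neg_of_enemy_mem he het hei
end
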